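/- arXiv:2003.09742 — 4 statements merged into one kernel-verified Lean document; each statement's English description precedes it below -/
import Mathlib

section
/- Let Ω ⊂ ℝ² be a bounded open convex set, let f, g be asymptotic geodesic lines of (Ω, h_Ω) with common boundary point ξ = f(+∞) = g(+∞) ∈ ∂Ω, and assume that Ω admits a unique supporting line at ξ (i.e. there is exactly one Euclidean line ℓ with ξ ∈ ℓ and ℓ ∩ Ω = ∅). Then there exists c ∈ ℝ such that lim_{t→+∞} h_Ω(f(t+c), g(t)) = 0. -/
open Real Filter Set Metric

/- The Hilbert distance on a (bounded open convex) domain `Ω` in Euclidean space: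
for `p ≠ q` it is `log ((‖p' - q‖ * ‖q' - p‖) / (‖p' - p‖ * ‖q' - q‖))` where `p', q'`
are the two boundary points of the chord through `p` and `q`, labelled so that `p` lies
strictly between `p'` and `q`, and `q` lies strictly between `p` and `q'`. -/

open Classical in
noncomputable def hilbertDist {n : ℕ} (Ω : Set (EuclideanSpace ℝ (Fin n)))
    (p q : EuclideanSpace ℝ (Fin n)) : ℝ :=
  if _h : p = q then 0
  else Classical.epsilon fun d : ℝ =>
    ∃ p' q' : EuclideanSpace ℝ (Fin n), p' ∈ frontier Ω ∧ q' ∈ frontier Ω ∧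
      p ∈ openSegment ℝ p' q ∧ q ∈ openSegment ℝ p q' ∧
      d = Real.log ((‖p' - q‖ * ‖q' - p‖) / (‖p' - p‖ * ‖q' - q‖))

/-- A geodesic line of `(Ω, hilbertDist Ω)`: a map `f : ℝ → Ω` whose image lies on a
Euclidean line and which satisfies `hilbertDist Ω (f s) (f t) = |s - t|`. -/
def IsGeodesicLine {n : ℕ} (Ω : Set (EuclideanSpace ℝ (Fin n)))
    (f : ℝ → EuclideanSpace ℝ (Fin n)) : Prop :=
  (∀ t, f t ∈ Ω) ∧ Collinear ℝ (Set.range f) ∧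
    ∀ s t : ℝ, hilbertDist Ω (f s) (f t) = |s - t|

/-- A Euclidean (affine) line in the plane. -/
def IsEuclideanLine {n : ℕ} (L : Set (EuclideanSpace ℝ (Fin n))) : Prop :=
  ∃ a v : EuclideanSpace ℝ (Fin n), v ≠ 0 ∧ L = {x | ∃ t : ℝ, x = a + t • v}

/-- A supporting line of `Ω` at a boundary point `ξ`. -/
def IsSupportLine (Ω : Set (EuclideanSpace ℝ (Fin 2))) (ξ : EuclideanSpace ℝ (Fin 2))
    (L : Set (EuclideanSpace ℝ (Fin 2))) : Prop :=
  IsEuclideanLine L ∧ ξ ∈ L ∧ L ∩ Ω = ∅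

/-!
A geodesic line tending to `ξ` runs along a chord of `Ω` ending at `ξ`, and the cross-ratio
formula for the Hilbert distance on that chord gives `exp t • (f t - ξ) → K • (f 0 - ξ)` with
`K > 0`. Shifting `f` by a suitable `c`, the points `x = f (t + c)` and `y = g t` approach `ξ`
at the same rate and at asymptotically equal heights above the support line at `ξ`, so the
chord through `x` and `y` becomes parallel to that line. Uniqueness of the support line forces
the supporting normals at nearby boundary points to converge to the normal at `ξ`, i.e. `∂Ω` is
flat at `ξ`. Hence the distances `P`, `Q` from `x`, `y` to `∂Ω` along their chord are much larger
than `N = ‖x - y‖`, and `h_Ω(x, y) = log ((1 + N / P) * (1 + N / Q)) → 0`.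
-/

open Topology
open scoped RealInnerProductSpace

section Slice

variable {E : Type*} [NormedAddCommGroup E] [NormedSpace ℝ E] {Ω : Set E}

theorem add_smul_mem_openSegment {a v : E} {α s β : ℝ} (hαs : α < s) (hsβ : s < β) :
    a + s • v ∈ openSegment ℝ (a + α • v) (a + β • v) := by
  rw [openSegment_eq_image']
  refine ⟨(s - α) / (β - α), ⟨by bound, by rw [div_lt_one (by linarith)]; linarith⟩, ?_⟩
  have : β - α ≠ 0 := by linarith
  match_scalars <;> field_simp <;> ring

theorem exists_eq_add_smul_of_mem_openSegment {p' p q : E} (h : p ∈ openSegment ℝ p' q) :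
    ∃ s : ℝ, 1 < s ∧ p' = q + s • (p - q) := by
  obtain ⟨a, b, ha, hb, hab, rfl⟩ := h
  refine ⟨1 / a, by rw [lt_div_iff₀ ha]; linarith, ?_⟩
  match_scalars
  · field_simp
  · field_simp
    linear_combination -hab

theorem bddBelow_bddAbove_setOf_add_smul_mem (hbdd : Bornology.IsBounded Ω) (a : E) {v : E}
    (hv : v ≠ 0) : BddBelow {s : ℝ | a + s • v ∈ Ω} ∧ BddAbove {s : ℝ | a + s • v ∈ Ω} := by
  obtain ⟨R, hR⟩ := isBounded_iff_forall_norm_le.1 hbdd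
  refine isBounded_iff_bddBelow_bddAbove.1 (isBounded_iff_forall_norm_le.2
    ⟨(R + ‖a‖) / ‖v‖, fun s hs => ?_⟩)
  rw [le_div_iff₀ (norm_pos_iff.2 hv), ← norm_smul]
  calc ‖s • v‖ = ‖(a + s • v) - a‖ := by rw [add_sub_cancel_left]
    _ ≤ ‖a + s • v‖ + ‖a‖ := norm_sub_le _ _
    _ ≤ R + ‖a‖ := by gcongr; exact hR _ hs

theorem exists_setOf_add_smul_mem_eq_Ioo (hopen : IsOpen Ω) (hconv : Convex ℝ Ω)
    (hbdd : Bornology.IsBounded Ω) {a v : E} (hv : v ≠ 0) {s₀ : ℝ} (hs₀ : a + s₀ • v ∈ Ω) :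
    ∃ α β : ℝ, α < β ∧ {s : ℝ | a + s • v ∈ Ω} = Ioo α β := by
  set S := {s : ℝ | a + s • v ∈ Ω}
  obtain ⟨hbelow, habove⟩ := bddBelow_bddAbove_setOf_add_smul_mem hbdd a hv
  have hSopen : IsOpen S := hopen.preimage (by fun_prop)
  have hSconn : IsConnected S := by
    refine ⟨⟨s₀, hs₀⟩, Convex.isPreconnected ?_⟩
    have hS : S = AffineMap.lineMap a (a + v) ⁻¹' Ω := by
      ext s
      rw [mem_preimage, AffineMap.lineMap_apply_module', add_sub_cancel_left, add_comm]
      rfl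
    exact hS ▸ hconv.affine_preimage _
  have hsub : S ⊆ Ioo (sInf S) (sSup S) := fun s hs =>
    ⟨(csInf_le hbelow hs).lt_of_ne fun h => by
        obtain ⟨b, hb, hbS⟩ :=
          Filter.Eventually.exists_lt (p := (· ∈ S)) (hSopen.mem_nhds (h ▸ hs))
        exact (csInf_le hbelow hbS).not_gt hb,
      (le_csSup habove hs).lt_of_ne fun h => by
        obtain ⟨b, hb, hbS⟩ :=
          Filter.Eventually.exists_gt (p := (· ∈ S)) (hSopen.mem_nhds (h ▸ hs))
        exact (le_csSup habove hbS).not_gt hb⟩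
  exact ⟨sInf S, sSup S, (hsub hs₀).1.trans (hsub hs₀).2,
    hsub.antisymm (hSconn.Ioo_csInf_csSup_subset hbelow habove)⟩

theorem add_smul_mem_frontier_of_setOf_eq_Ioo (hopen : IsOpen Ω) {a v : E} {α β : ℝ}
    (hαβ : α < β) (hS : {s : ℝ | a + s • v ∈ Ω} = Ioo α β) :
    a + α • v ∈ frontier Ω ∧ a + β • v ∈ frontier Ω := by
  have hcl : ∀ s ∈ Icc α β, a + s • v ∈ closure Ω := fun s hs =>
    map_mem_closure (f := fun s : ℝ => a + s • v) (by fun_prop) (by rwa [closure_Ioo hαβ.ne])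
      fun r hr => by rw [← hS] at hr; exact hr
  have hnot : ∀ s ∉ Ioo α β, a + s • v ∉ Ω := fun s hs hmem => hs (hS ▸ hmem)
  rw [hopen.frontier_eq]
  exact ⟨⟨hcl α (left_mem_Icc.2 hαβ.le), hnot α (by simp)⟩,
    ⟨hcl β (right_mem_Icc.2 hαβ.le), hnot β (by simp)⟩⟩

theorem exists_mem_frontier_mem_openSegment (hopen : IsOpen Ω) (hconv : Convex ℝ Ω)
    (hbdd : Bornology.IsBounded Ω) {p q : E} (hp : p ∈ Ω) (hq : q ∈ Ω) (hpq : p ≠ q) :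
    ∃ p' ∈ frontier Ω, p ∈ openSegment ℝ p' q := by
  have hv : p - q ≠ 0 := sub_ne_zero.2 hpq
  obtain ⟨α, β, hαβ, hS⟩ := exists_setOf_add_smul_mem_eq_Ioo hopen hconv hbdd hv
    (s₀ := 0) (by simpa using hq)
  have h1 : (1 : ℝ) ∈ Ioo α β := hS ▸ (by simpa using hp : q + (1 : ℝ) • (p - q) ∈ Ω)
  refine ⟨q + β • (p - q), (add_smul_mem_frontier_of_setOf_eq_Ioo hopen hαβ hS).2, ?_⟩
  rw [openSegment_symm]
  simpa using add_smul_mem_openSegment (a := q) (v := p - q) zero_lt_one h1.2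

theorem eq_of_mem_openSegment_of_mem_frontier (hopen : IsOpen Ω) (hconv : Convex ℝ Ω)
    {q p p₁ p₂ : E} (hq : q ∈ Ω) (h₁ : p₁ ∈ frontier Ω) (h₂ : p₂ ∈ frontier Ω)
    (hp₁ : p ∈ openSegment ℝ p₁ q) (hp₂ : p ∈ openSegment ℝ p₂ q) : p₁ = p₂ := by
  obtain ⟨s₁, hs₁, rfl⟩ := exists_eq_add_smul_of_mem_openSegment hp₁
  obtain ⟨s₂, hs₂, rfl⟩ := exists_eq_add_smul_of_mem_openSegment hp₂
  -- the nearer of two frontier points on a ray from `q ∈ Ω` would be interior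
  have key : ∀ {s t : ℝ}, 0 < s → s < t → q + s • (p - q) ∈ frontier Ω →
      q + t • (p - q) ∈ frontier Ω → False := fun hs hst hfs hft => by
    have hmem := hconv.openSegment_interior_closure_subset_interior
      (hopen.interior_eq.symm ▸ hq) (frontier_subset_closure hft)
      (by simpa using add_smul_mem_openSegment (a := q) (v := p - q) hs hst)
    rw [hopen.interior_eq] at hmem
    exact disjoint_left.1 (disjoint_frontier_iff_isOpen.2 hopen) hfs hmem
  rcases lt_trichotomy s₁ s₂ with h | rfl | h
  · exact (key (by linarith) h h₁ h₂).elim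
  · rfl
  · exact (key (by linarith) h h₂ h₁).elim

end Slice

section HilbertDist

variable {n : ℕ} {Ω : Set (EuclideanSpace ℝ (Fin n))}

theorem hilbertDist_self (p : EuclideanSpace ℝ (Fin n)) : hilbertDist Ω p p = 0 := by
  simp [hilbertDist]

theorem hilbertDist_eq_log (hopen : IsOpen Ω) (hconv : Convex ℝ Ω)
    {p q p' q' : EuclideanSpace ℝ (Fin n)} (hp : p ∈ Ω) (hq : q ∈ Ω) (hpq : p ≠ q)
    (hp' : p' ∈ frontier Ω) (hq' : q' ∈ frontier Ω)
    (hpp' : p ∈ openSegment ℝ p' q) (hqq' : q ∈ openSegment ℝ p q') :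
    hilbertDist Ω p q = log ((‖p' - q‖ * ‖q' - p‖) / (‖p' - p‖ * ‖q' - q‖)) := by
  rw [hilbertDist, dif_neg hpq]
  obtain ⟨p₁, q₁, hp₁, hq₁, hpp₁, hqq₁, h⟩ :=
    Classical.epsilon_spec (p := fun d : ℝ => ∃ p₁ q₁ : EuclideanSpace ℝ (Fin n),
      p₁ ∈ frontier Ω ∧ q₁ ∈ frontier Ω ∧ p ∈ openSegment ℝ p₁ q ∧ q ∈ openSegment ℝ p q₁ ∧
      d = log ((‖p₁ - q‖ * ‖q₁ - p‖) / (‖p₁ - p‖ * ‖q₁ - q‖)))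
      ⟨_, p', q', hp', hq', hpp', hqq', rfl⟩
  rw [openSegment_symm ℝ p] at hqq' hqq₁
  rw [h, eq_of_mem_openSegment_of_mem_frontier hopen hconv hq hp₁ hp' hpp₁ hpp',
    eq_of_mem_openSegment_of_mem_frontier hopen hconv hp hq₁ hq' hqq₁ hqq']

theorem hilbertDist_add_smul (hopen : IsOpen Ω) (hconv : Convex ℝ Ω)
    {a v : EuclideanSpace ℝ (Fin n)} (hv : v ≠ 0) {α β s t : ℝ}
    (hS : {s : ℝ | a + s • v ∈ Ω} = Ioo α β) (hαs : α < s) (hst : s < t) (htβ : t < β) :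
    hilbertDist Ω (a + s • v) (a + t • v) = log ((t - α) * (β - s) / ((s - α) * (β - t))) := by
  have hmem : ∀ r ∈ Ioo α β, a + r • v ∈ Ω := fun r hr => by rw [← hS] at hr; exact hr
  have hfr := add_smul_mem_frontier_of_setOf_eq_Ioo hopen (hαs.trans (hst.trans htβ)) hS
  have hne : a + s • v ≠ a + t • v := by
    rw [Ne, add_right_inj, smul_left_injective ℝ hv |>.eq_iff]; exact hst.ne
  have hnorm : ∀ r r' : ℝ, ‖(a + r • v) - (a + r' • v)‖ = |r - r'| * ‖v‖ := fun r r' => by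
    rw [add_sub_add_left_eq_sub, ← sub_smul, norm_smul, Real.norm_eq_abs]
  rw [hilbertDist_eq_log hopen hconv (hmem s ⟨hαs, hst.trans htβ⟩) (hmem t ⟨hαs.trans hst, htβ⟩)
    hne hfr.1 hfr.2 (add_smul_mem_openSegment hαs hst) (add_smul_mem_openSegment hst htβ),
    hnorm, hnorm, hnorm, hnorm, abs_sub_comm α, abs_sub_comm α,
    abs_of_pos (by linarith : 0 < t - α), abs_of_pos (by linarith : 0 < β - s),
    abs_of_pos (sub_pos.2 hαs), abs_of_pos (sub_pos.2 htβ)]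
  have : ‖v‖ ≠ 0 := norm_ne_zero_iff.2 hv
  have : s - α ≠ 0 := by linarith
  have : β - t ≠ 0 := by linarith
  congr 1
  field_simp

theorem abs_hilbertDist_le (hopen : IsOpen Ω) (hconv : Convex ℝ Ω)
    (hbdd : Bornology.IsBounded Ω) {x y : EuclideanSpace ℝ (Fin n)} (hx : x ∈ Ω) (hy : y ∈ Ω)
    {ρ : ℝ} (hρ : 0 ≤ ρ)
    (hxρ : ∀ z ∉ Ω, x ∈ openSegment ℝ z y → ‖x - y‖ ≤ ρ * ‖z - x‖)
    (hyρ : ∀ z ∉ Ω, y ∈ openSegment ℝ z x → ‖y - x‖ ≤ ρ * ‖z - y‖) :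
    |hilbertDist Ω x y| ≤ 2 * log (1 + ρ) := by
  have hlog : 0 ≤ log (1 + ρ) := log_nonneg (by linarith)
  rcases eq_or_ne x y with rfl | hxy
  · simpa [hilbertDist_self] using hlog
  have hfr : ∀ {z}, z ∈ frontier Ω → z ∉ Ω :=
    fun hz => disjoint_left.1 (disjoint_frontier_iff_isOpen.2 hopen) hz
  obtain ⟨p', hp', hxp'⟩ := exists_mem_frontier_mem_openSegment hopen hconv hbdd hx hy hxy
  obtain ⟨q', hq', hyq'⟩ := exists_mem_frontier_mem_openSegment hopen hconv hbdd hy hx hxy.symm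
  have hP : 0 < ‖p' - x‖ := norm_pos_iff.2 (sub_ne_zero.2 fun h => hfr hp' (h ▸ hx))
  have hQ : 0 < ‖q' - y‖ := norm_pos_iff.2 (sub_ne_zero.2 fun h => hfr hq' (h ▸ hy))
  have hN : ‖x - y‖ ≤ ρ * ‖p' - x‖ := hxρ p' (hfr hp') hxp'
  have hN' : ‖x - y‖ ≤ ρ * ‖q' - y‖ := norm_sub_rev x y ▸ hyρ q' (hfr hq') hyq'
  have hp'y : ‖p' - y‖ = ‖p' - x‖ + ‖x - y‖ := by
    simpa [dist_eq_norm] using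
      (dist_add_dist_of_mem_segment (openSegment_subset_segment ℝ _ _ hxp')).symm
  have hq'x : ‖q' - x‖ = ‖q' - y‖ + ‖x - y‖ := by
    simpa [dist_eq_norm, norm_sub_rev y x] using
      (dist_add_dist_of_mem_segment (openSegment_subset_segment ℝ _ _ hyq')).symm
  rw [hilbertDist_eq_log hopen hconv hx hy hxy hp' hq' hxp' (openSegment_symm ℝ x q' ▸ hyq'),
    hp'y, hq'x]
  set N := ‖x - y‖
  set P := ‖p' - x‖
  set Q := ‖q' - y‖
  have hN0 : 0 ≤ N := norm_nonneg _
  have h2 : log ((1 + ρ) ^ 2) = 2 * log (1 + ρ) := by simp [log_pow]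
  rw [abs_of_nonneg (log_nonneg ((one_le_div (by positivity)).2 (by gcongr <;> linarith))),
    ← h2]
  refine log_le_log (by positivity) ((div_le_iff₀ (by positivity)).2 ?_)
  calc (P + N) * (Q + N) ≤ (P + ρ * P) * (Q + ρ * Q) := by gcongr
    _ = (1 + ρ) ^ 2 * (P * Q) := by ring

theorem tendsto_hilbertDist_nhds_zero (hopen : IsOpen Ω) (hconv : Convex ℝ Ω)
    (hbdd : Bornology.IsBounded Ω) {ι : Type*} {l : Filter ι}
    {x y : ι → EuclideanSpace ℝ (Fin n)} (hx : ∀ i, x i ∈ Ω) (hy : ∀ i, y i ∈ Ω)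
    (h : ∀ ρ > 0, ∀ᶠ i in l,
      (∀ z ∉ Ω, x i ∈ openSegment ℝ z (y i) → ‖x i - y i‖ ≤ ρ * ‖z - x i‖) ∧
      (∀ z ∉ Ω, y i ∈ openSegment ℝ z (x i) → ‖y i - x i‖ ≤ ρ * ‖z - y i‖)) :
    Tendsto (fun i => hilbertDist Ω (x i) (y i)) l (𝓝 0) := by
  refine Metric.tendsto_nhds.2 fun ε hε => ?_
  have hρ : 0 < exp (ε / 4) - 1 := by linarith [add_one_lt_exp (by positivity : ε / 4 ≠ 0)]
  filter_upwards [h _ hρ] with i hi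
  rw [dist_zero_right, norm_eq_abs]
  calc |hilbertDist Ω (x i) (y i)| ≤ 2 * log (1 + (exp (ε / 4) - 1)) :=
        abs_hilbertDist_le hopen hconv hbdd (hx i) (hy i) hρ.le hi.1 hi.2
    _ < ε := by rw [add_sub_cancel, log_exp]; linarith

end HilbertDist

theorem Collinear.exists_eq_add_smul_of_tendsto {E : Type*} [NormedAddCommGroup E]
    [NormedSpace ℝ E] [FiniteDimensional ℝ E] {ι : Type*} {l : Filter ι} [l.NeBot]
    {f : ι → E} {ξ : E} (hcol : Collinear ℝ (range f)) (hfξ : Tendsto f l (𝓝 ξ)) (i₀ : ι)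
    (hne : f i₀ ≠ ξ) :
    ∃ r : ι → ℝ, (∀ i, f i = f i₀ + r i • (ξ - f i₀)) ∧ Tendsto r l (𝓝 1) := by
  have hξspan : ξ ∈ affineSpan ℝ (range f) :=
    (AffineSubspace.closed_of_finiteDimensional _).closure_subset_iff.2 (subset_affineSpan ℝ _)
      (mem_closure_of_tendsto hfξ (Eventually.of_forall mem_range_self))
  have hline : ∀ i, ∃ r : ℝ, f i = f i₀ + r • (ξ - f i₀) := fun i => by
    obtain ⟨r, hr⟩ := mem_affineSpan_pair_iff_exists_lineMap_eq.1
      (((collinear_insert_iff_of_mem_affineSpan hξspan).2 hcol).mem_affineSpan_of_mem_of_ne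
        (mem_insert_of_mem _ (mem_range_self i₀)) (mem_insert _ _)
        (mem_insert_of_mem _ (mem_range_self i)) hne)
    exact ⟨r, by rw [← hr, AffineMap.lineMap_apply_module', add_comm]⟩
  choose r hr using hline
  refine ⟨r, hr, tendsto_iff_norm_sub_tendsto_zero.2 ?_⟩
  have hw : ‖ξ - f i₀‖ ≠ 0 := norm_ne_zero_iff.2 (sub_ne_zero.2 hne.symm)
  have h := (tendsto_iff_norm_sub_tendsto_zero.1 hfξ).div_const ‖ξ - f i₀‖
  rw [zero_div] at h
  refine h.congr fun i => ?_
  rw [hr i, show f i₀ + r i • (ξ - f i₀) - ξ = (r i - 1) • (ξ - f i₀) by module, norm_smul,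
    mul_div_cancel_right₀ _ hw]

theorem IsGeodesicLine.tendsto_exp_smul_sub {n : ℕ} {Ω : Set (EuclideanSpace ℝ (Fin n))}
    {f : ℝ → EuclideanSpace ℝ (Fin n)} {ξ : EuclideanSpace ℝ (Fin n)} (hf : IsGeodesicLine Ω f)
    (hopen : IsOpen Ω) (hconv : Convex ℝ Ω) (hbdd : Bornology.IsBounded Ω) (hξ : ξ ∉ Ω)
    (hfξ : Tendsto f atTop (𝓝 ξ)) :
    ∃ K : ℝ, 0 < K ∧ Tendsto (fun t => exp t • (f t - ξ)) atTop (𝓝 (K • (f 0 - ξ))) := by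
  obtain ⟨hfΩ, hcol, hdist⟩ := hf
  have hne : f 0 ≠ ξ := fun h => hξ (h ▸ hfΩ 0)
  obtain ⟨r, hr, hrlim⟩ := hcol.exists_eq_add_smul_of_tendsto hfξ 0 hne
  set w := ξ - f 0
  have hw : w ≠ 0 := sub_ne_zero.2 hne.symm
  have hr0 : r 0 = 0 := by simpa [hw] using (hr 0).symm
  have hsub : ∀ t, f t - ξ = (1 - r t) • (f 0 - ξ) := fun t => by
    rw [hr t]; simp only [w]; module
  obtain ⟨α, β, hαβ, hS⟩ := exists_setOf_add_smul_mem_eq_Ioo hopen hconv hbdd hw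
    (by simpa using hfΩ 0 : f 0 + (0 : ℝ) • w ∈ Ω)
  have hrS : ∀ t, r t ∈ Ioo α β := fun t => by
    rw [← hS]; show f 0 + r t • w ∈ Ω; rw [← hr t]; exact hfΩ t
  have hα : α < 0 := hr0 ▸ (hrS 0).1
  obtain rfl : β = 1 := by
    refine le_antisymm (not_lt.1 fun h1 => hξ ?_) (le_of_tendsto' hrlim fun t => (hrS t).2.le)
    have : (1 : ℝ) ∈ {s : ℝ | f 0 + s • w ∈ Ω} := hS ▸ ⟨by linarith, h1⟩
    simpa [w] using this
  -- the cross ratio of `f 0, f t` against the chord endpoints `f 0 + α • w` and `ξ` is `exp t`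
  have hexp : ∀ᶠ t in atTop, exp t * (1 - r t) = (r t - α) / -α := by
    filter_upwards [hrlim.eventually (lt_mem_nhds zero_lt_one), eventually_ge_atTop 0]
      with t hrt ht
    have h := hilbertDist_add_smul hopen hconv hw hS (hrS 0).1 (hr0.symm ▸ hrt) (hrS t).2
    rw [← hr 0, ← hr t, hdist, zero_sub, abs_neg, abs_of_nonneg ht, hr0, sub_zero, mul_one,
      zero_sub] at h
    have h1 : 0 < 1 - r t := sub_pos.2 (hrS t).2
    nth_rw 1 [h]
    rw [exp_log (div_pos (sub_pos.2 (hrS t).1) (mul_pos (neg_pos.2 hα) h1))]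
    field_simp
  refine ⟨(1 - α) / -α, div_pos (by linarith) (by linarith), ?_⟩
  refine Tendsto.congr (fun t => by rw [hsub t, smul_smul]) ?_
  exact ((tendsto_congr' hexp).2 ((hrlim.sub_const α).div_const (-α))).smul_const _

section InwardNormal

variable {F : Type*} [NormedAddCommGroup F] [InnerProductSpace ℝ F] {Ω : Set F}

def IsInwardNormal (Ω : Set F) (z ν : F) : Prop :=
  ∀ a ∈ Ω, 0 < ⟪a - z, ν⟫

theorem IsInwardNormal.inner_nonneg_of_mem_closure {z ν b : F} (h : IsInwardNormal Ω z ν)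
    (hb : b ∈ closure Ω) : 0 ≤ ⟪b - z, ν⟫ :=
  closure_minimal (t := {b | 0 ≤ ⟪b - z, ν⟫}) (fun a ha => (h a ha).le)
    (isClosed_le continuous_const (by fun_prop)) hb

theorem exists_isInwardNormal [CompleteSpace F] (hopen : IsOpen Ω) (hconv : Convex ℝ Ω)
    (hne : Ω.Nonempty) {z : F} (hz : z ∉ Ω) : ∃ ν, ‖ν‖ = 1 ∧ IsInwardNormal Ω z ν := by
  obtain ⟨φ, u, hφΩ, hφz⟩ := geometric_hahn_banach_open hconv hopen (convex_singleton z)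
    (disjoint_singleton_right.2 hz)
  set ν := (InnerProductSpace.toDual ℝ F).symm φ
  have hν : IsInwardNormal Ω z (-ν) := fun a ha => by
    rw [inner_neg_right, inner_sub_left, real_inner_comm, InnerProductSpace.toDual_symm_apply,
      real_inner_comm, InnerProductSpace.toDual_symm_apply]
    linarith [hφΩ a ha, hφz z rfl]
  have hν0 : ν ≠ 0 := fun h0 => by
    obtain ⟨a, ha⟩ := hne
    simpa [h0] using hν a ha
  refine ⟨‖ν‖⁻¹ • -ν, by simp [norm_smul, hν0], fun a ha => ?_⟩
  rw [real_inner_smul_right]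
  exact mul_pos (by positivity) (hν a ha)

theorem IsInwardNormal.of_tendsto (hopen : IsOpen Ω) {ι : Type*} {l : Filter ι} [l.NeBot]
    {z ν : ι → F} {ξ ν₀ : F} (h : ∀ i, IsInwardNormal Ω (z i) (ν i))
    (hz : Tendsto z l (𝓝 ξ)) (hν : Tendsto ν l (𝓝 ν₀)) (hν₀ : ν₀ ≠ 0) :
    IsInwardNormal Ω ξ ν₀ := by
  intro a ha
  -- the weak inequality in the limit becomes strict after pushing `a` slightly along `-ν₀`
  have hnear : ∀ᶠ s in 𝓝 (0 : ℝ), a - s • ν₀ ∈ Ω :=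
    (continuous_const.sub (continuous_id.smul continuous_const)).continuousAt.preimage_mem_nhds
      (by simpa using hopen.mem_nhds ha)
  obtain ⟨s, hs, hsΩ⟩ := hnear.exists_gt
  have h0 : 0 ≤ ⟪a - s • ν₀ - ξ, ν₀⟫ :=
    ge_of_tendsto ((tendsto_const_nhds.sub hz).inner hν)
      (Eventually.of_forall fun i => (h i _ hsΩ).le)
  rw [sub_right_comm, inner_sub_left, real_inner_smul_left, real_inner_self_eq_norm_sq] at h0
  have : 0 < s * ‖ν₀‖ ^ 2 := by positivity
  linarith

theorem IsInwardNormal.eq_of_setOf_inner_eq {ξ ν w : F} (hν : IsInwardNormal Ω ξ ν)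
    (hw : IsInwardNormal Ω ξ w) (hν1 : ‖ν‖ = 1) (hw1 : ‖w‖ = 1) (hne : Ω.Nonempty)
    (heq : {x | ⟪x - ξ, ν⟫ = 0} = {x | ⟪x - ξ, w⟫ = 0}) : ν = w := by
  have hK : (ℝ ∙ ν)ᗮ = (ℝ ∙ w)ᗮ := by
    ext u
    simpa [Submodule.mem_orthogonal_singleton_iff_inner_right, real_inner_comm] using
      congrArg (ξ + u ∈ ·) heq
  obtain ⟨c, rfl⟩ : ∃ c : ℝ, c • w = ν := Submodule.mem_span_singleton.1 <| by
    rw [← Submodule.orthogonal_orthogonal (ℝ ∙ w), ← hK, Submodule.orthogonal_orthogonal]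
    exact Submodule.mem_span_singleton_self ν
  obtain ⟨a, ha⟩ := hne
  have hνa := hν a ha
  rw [real_inner_smul_right] at hνa
  have hc : 0 < c := pos_of_mul_pos_left hνa (hw a ha).le
  rw [norm_smul, hw1, mul_one, Real.norm_of_nonneg hc.le] at hν1
  rw [hν1, one_smul]

variable [ProperSpace F]

theorem eventually_dist_lt_of_isInwardNormal_unique (hopen : IsOpen Ω) {ξ nv : F}
    (huniq : ∀ ν, ‖ν‖ = 1 → IsInwardNormal Ω ξ ν → ν = nv) {ε : ℝ} (hε : 0 < ε) :
    ∀ᶠ z in 𝓝 ξ, ∀ ν, ‖ν‖ = 1 → IsInwardNormal Ω z ν → dist ν nv < ε := by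
  by_contra h
  simp only [not_eventually, not_forall, not_lt] at h
  obtain ⟨z, hz, hzν⟩ := exists_seq_forall_of_frequently h
  choose ν hν1 hνn hνε using hzν
  obtain ⟨ν₀, hν₀, φ, hφ, hlim⟩ := (isCompact_sphere (0 : F) 1).tendsto_subseq
    (fun k => mem_sphere_zero_iff_norm.2 (hν1 k))
  have hν₀1 : ‖ν₀‖ = 1 := mem_sphere_zero_iff_norm.1 hν₀
  have heq : ν₀ = nv := huniq ν₀ hν₀1 (IsInwardNormal.of_tendsto hopen (fun k => hνn (φ k))
    (hz.comp hφ.tendsto_atTop) hlim (by rintro rfl; simp at hν₀1))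
  have : ε ≤ dist ν₀ nv :=
    ge_of_tendsto (hlim.dist tendsto_const_nhds) (Eventually.of_forall fun k => hνε (φ k))
  rw [heq, dist_self] at this
  linarith

theorem eventually_inner_le_of_isInwardNormal_unique (hopen : IsOpen Ω) (hconv : Convex ℝ Ω)
    {ξ nv : F} (hξ : ξ ∈ closure Ω) (huniq : ∀ ν, ‖ν‖ = 1 → IsInwardNormal Ω ξ ν → ν = nv)
    {ε : ℝ} (hε : 0 < ε) : ∀ᶠ z in 𝓝 ξ, z ∉ Ω → ⟪z - ξ, nv⟫ ≤ ε * ‖z - ξ‖ := by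
  have hne : Ω.Nonempty := closure_nonempty_iff.1 ⟨ξ, hξ⟩
  filter_upwards [eventually_dist_lt_of_isInwardNormal_unique hopen huniq hε] with z hz hzΩ
  obtain ⟨ν, hν1, hν⟩ := exists_isInwardNormal hopen hconv hne hzΩ
  have h0 : 0 ≤ ⟪ξ - z, ν⟫ := hν.inner_nonneg_of_mem_closure hξ
  rw [← neg_sub, inner_neg_left] at h0
  calc ⟪z - ξ, nv⟫ = ⟪z - ξ, ν⟫ + ⟪z - ξ, nv - ν⟫ := by rw [← inner_add_right, add_sub_cancel]
    _ ≤ 0 + ‖z - ξ‖ * ‖nv - ν‖ := add_le_add (by linarith) (real_inner_le_norm _ _)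
    _ ≤ ε * ‖z - ξ‖ := by
      rw [zero_add, mul_comm, ← dist_eq_norm, dist_comm]
      exact mul_le_mul_of_nonneg_right (hz ν hν1 hν).le (norm_nonneg _)

end InwardNormal

theorem isEuclideanLine_setOf_inner_sub_eq_zero (ξ : EuclideanSpace ℝ (Fin 2))
    {w : EuclideanSpace ℝ (Fin 2)} (hw : w ≠ 0) : IsEuclideanLine {x | ⟪x - ξ, w⟫ = 0} := by
  have : Fact (Module.finrank ℝ (EuclideanSpace ℝ (Fin 2)) = 1 + 1) := ⟨by simp⟩
  obtain ⟨v, hv0, hv⟩ :=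
    finrank_eq_one_iff'.1 (Submodule.finrank_orthogonal_span_singleton (𝕜 := ℝ) hw)
  refine ⟨ξ, v, by simpa using hv0, Set.ext fun x => ?_⟩
  change ⟪x - ξ, w⟫ = 0 ↔ _
  rw [real_inner_comm, ← Submodule.mem_orthogonal_singleton_iff_inner_right]
  constructor
  · intro hx
    obtain ⟨c, hc⟩ := hv ⟨x - ξ, hx⟩
    exact ⟨c, by rw [← sub_eq_iff_eq_add', ← Submodule.coe_smul, hc]⟩
  · rintro ⟨c, rfl⟩
    simpa using (c • v).2

theorem IsInwardNormal.isSupportLine {Ω : Set (EuclideanSpace ℝ (Fin 2))}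
    {ξ ν : EuclideanSpace ℝ (Fin 2)} (hν : IsInwardNormal Ω ξ ν) (hν0 : ν ≠ 0) :
    IsSupportLine Ω ξ {x | ⟪x - ξ, ν⟫ = 0} :=
  ⟨isEuclideanLine_setOf_inner_sub_eq_zero ξ hν0, by simp,
    eq_empty_iff_forall_notMem.2 fun x hx => (hν x hx.2).ne' hx.1⟩

theorem IsInwardNormal.eq_of_existsUnique_isSupportLine {Ω : Set (EuclideanSpace ℝ (Fin 2))}
    {ξ ν w : EuclideanSpace ℝ (Fin 2)} (hsupp : ∃! L, IsSupportLine Ω ξ L) (hne : Ω.Nonempty)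
    (hν : IsInwardNormal Ω ξ ν) (hw : IsInwardNormal Ω ξ w) (hν1 : ‖ν‖ = 1) (hw1 : ‖w‖ = 1) :
    ν = w :=
  hν.eq_of_setOf_inner_eq hw hν1 hw1 hne <| hsupp.unique
    (hν.isSupportLine (by rintro rfl; simp at hν1)) (hw.isSupportLine (by rintro rfl; simp at hw1))

theorem exists_isInwardNormal_eventually_inner_le {Ω : Set (EuclideanSpace ℝ (Fin 2))}
    (hopen : IsOpen Ω) (hconv : Convex ℝ Ω) {ξ : EuclideanSpace ℝ (Fin 2)}
    (hξ : ξ ∈ frontier Ω) (hsupp : ∃! L, IsSupportLine Ω ξ L) :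
    ∃ nv, IsInwardNormal Ω ξ nv ∧
      ∀ ε > 0, ∀ᶠ z in 𝓝 ξ, z ∉ Ω → ⟪z - ξ, nv⟫ ≤ ε * ‖z - ξ‖ := by
  have hne : Ω.Nonempty := closure_nonempty_iff.1 ⟨ξ, frontier_subset_closure hξ⟩
  obtain ⟨nv, hnv1, hnv⟩ := exists_isInwardNormal hopen hconv hne
    (disjoint_left.1 (disjoint_frontier_iff_isOpen.2 hopen) hξ)
  exact ⟨nv, hnv, fun ε hε =>
    eventually_inner_le_of_isInwardNormal_unique hopen hconv (frontier_subset_closure hξ)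
      (fun ν hν1 hν => hν.eq_of_existsUnique_isSupportLine hsupp hne hnv hν1 hnv1) hε⟩

section ChordEstimate

variable {F : Type*} [NormedAddCommGroup F] [InnerProductSpace ℝ F]

theorem norm_sub_le_mul_norm_sub_of_inner_le {ξ nv x y z : F} {ε ρ σ : ℝ} (hε : 0 ≤ ε)
    (hρ : 0 < ρ) (hσ : 0 ≤ σ) (hz : z - x = σ • (x - y))
    (hflat : ⟪z - ξ, nv⟫ ≤ ε * ‖z - ξ‖)
    (hkey : ε * ‖x - y‖ + |⟪x - y, nv⟫| < ρ * (⟪x - ξ, nv⟫ - ε * ‖x - ξ‖)) :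
    ‖x - y‖ ≤ ρ * ‖z - x‖ := by
  set D := ⟪x - ξ, nv⟫ - ε * ‖x - ξ‖
  set K := ε * ‖x - y‖ + |⟪x - y, nv⟫|
  have hD : 0 < D := pos_of_mul_pos_right ((by positivity : 0 ≤ K).trans_lt hkey) hρ.le
  have hzx : ‖z - x‖ = σ * ‖x - y‖ := by rw [hz, norm_smul, Real.norm_of_nonneg hσ]
  have hinner : ⟪z - ξ, nv⟫ = ⟪x - ξ, nv⟫ + σ * ⟪x - y, nv⟫ := by
    rw [← real_inner_smul_left, ← inner_add_left, ← hz, sub_add_sub_cancel']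
  have htri : ‖z - ξ‖ ≤ σ * ‖x - y‖ + ‖x - ξ‖ := hzx ▸ norm_sub_le_norm_sub_add_norm_sub z x ξ
  have hDK : D ≤ σ * K := by
    have := mul_le_mul_of_nonneg_left (neg_abs_le ⟪x - y, nv⟫) hσ
    nlinarith [mul_le_mul_of_nonneg_left htri hε]
  have hσρ : 1 ≤ σ * ρ := by
    refine le_of_mul_le_mul_right ?_ hD
    calc 1 * D ≤ σ * K := by rw [one_mul]; exact hDK
      _ ≤ σ * (ρ * D) := mul_le_mul_of_nonneg_left hkey.le hσ
      _ = σ * ρ * D := by ring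
  calc ‖x - y‖ = 1 * ‖x - y‖ := (one_mul _).symm
    _ ≤ σ * ρ * ‖x - y‖ := mul_le_mul_of_nonneg_right hσρ (norm_nonneg _)
    _ = ρ * ‖z - x‖ := by rw [hzx]; ring

theorem eventually_norm_sub_le_mul_norm_sub {Ω : Set F} {ξ nv : F}
    (hflat : ∀ ε > 0, ∀ᶠ z in 𝓝 ξ, z ∉ Ω → ⟪z - ξ, nv⟫ ≤ ε * ‖z - ξ‖)
    {ι : Type*} {l : Filter ι} {c : ι → ℝ} (hc : ∀ i, 0 < c i) {x y : ι → F} {X Y : F}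
    (hx : Tendsto x l (𝓝 ξ)) (hy : Tendsto y l (𝓝 ξ))
    (hX : Tendsto (fun i => c i • (x i - ξ)) l (𝓝 X))
    (hY : Tendsto (fun i => c i • (y i - ξ)) l (𝓝 Y))
    (hXY : ⟪X, nv⟫ = ⟪Y, nv⟫) (hXnv : 0 < ⟪X, nv⟫) {ρ : ℝ} (hρ : 0 < ρ) :
    ∀ᶠ i in l, ∀ z ∉ Ω, x i ∈ openSegment ℝ z (y i) → ‖x i - y i‖ ≤ ρ * ‖z - x i‖ := by
  obtain ⟨ε, hε, hεX⟩ := exists_pos_mul_lt (mul_pos hρ hXnv) (‖X - Y‖ + ρ * ‖X‖)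
  obtain ⟨δ, hδ, hδflat⟩ := Metric.eventually_nhds_iff.1 (hflat ε hε)
  -- the key inequality is homogeneous, so it can be checked on the rescaled points
  have hkey : ∀ᶠ i in l, ε * ‖x i - y i‖ + |⟪x i - y i, nv⟫| <
      ρ * (⟪x i - ξ, nv⟫ - ε * ‖x i - ξ‖) := by
    have hXY' := hX.sub hY
    have hlt : ε * ‖X - Y‖ + |⟪X - Y, nv⟫| < ρ * (⟪X, nv⟫ - ε * ‖X‖) := by
      rw [inner_sub_left, sub_eq_zero.2 hXY, abs_zero]
      linarith
    filter_upwards [((hXY'.norm.const_mul ε).add (hXY'.inner tendsto_const_nhds).abs).eventually_lt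
      (((hX.inner tendsto_const_nhds).sub (hX.norm.const_mul ε)).const_mul ρ) hlt] with i hi
    rw [← smul_sub, sub_sub_sub_cancel_right, norm_smul, real_inner_smul_left, norm_smul,
      real_inner_smul_left, abs_mul, Real.norm_of_nonneg (hc i).le, abs_of_pos (hc i)] at hi
    nlinarith [hc i]
  have hnear : ∀ᶠ i in l, ‖x i - ξ‖ < δ / 2 :=
    (tendsto_iff_norm_sub_tendsto_zero.1 hx).eventually (eventually_lt_nhds (half_pos hδ))
  have hsmall : ∀ᶠ i in l, ‖x i - y i‖ < ρ * (δ / 2) :=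
    (tendsto_iff_norm_sub_tendsto_zero.1 (hx.sub hy)).eventually
      (eventually_lt_nhds (mul_pos hρ (half_pos hδ))) |>.mono fun i hi => by
        rwa [sub_self, sub_zero] at hi
  filter_upwards [hkey, hnear, hsmall] with i hkey hnear hsmall z hz hseg
  obtain ⟨s, hs, rfl⟩ := exists_eq_add_smul_of_mem_openSegment hseg
  by_cases hzδ : ‖y i + s • (x i - y i) - ξ‖ < δ
  · exact norm_sub_le_mul_norm_sub_of_inner_le hε.le hρ (by linarith : 0 ≤ s - 1)
      (by module) (hδflat (by rwa [dist_eq_norm]) hz) hkey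
  · have := norm_sub_le_norm_sub_add_norm_sub (y i + s • (x i - y i)) (x i) ξ
    nlinarith

end ChordEstimate

theorem tendsto_exp_smul_comp_add_const {F : Type*} [NormedAddCommGroup F]
    [NormedSpace ℝ F] {u : ℝ → F} {U : F} (h : Tendsto (fun t => exp t • u t) atTop (𝓝 U))
    (c : ℝ) : Tendsto (fun t => exp t • u (t + c)) atTop (𝓝 (exp (-c) • U)) :=
  (tendsto_const_nhds.smul (h.comp (tendsto_atTop_add_const_right _ c tendsto_id))).congr
    fun t => by simp [smul_smul, ← exp_add]

theorem asymptotic_geodesics_tendsto_zero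
    (Ω : Set (EuclideanSpace ℝ (Fin 2)))
    (hopen : IsOpen Ω) (hconv : Convex ℝ Ω) (hbdd : Bornology.IsBounded Ω)
    (f g : ℝ → EuclideanSpace ℝ (Fin 2)) (ξ : EuclideanSpace ℝ (Fin 2))
    (hf : IsGeodesicLine Ω f) (hg : IsGeodesicLine Ω g)
    (hξ : ξ ∈ frontier Ω)
    (hfξ : Tendsto f atTop (nhds ξ)) (hgξ : Tendsto g atTop (nhds ξ))
    (hsupp : ∃! L : Set (EuclideanSpace ℝ (Fin 2)), IsSupportLine Ω ξ L) :
    ∃ c : ℝ, Tendsto (fun t => hilbertDist Ω (f (t + c)) (g t)) atTop (nhds 0) := by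
  have hξΩ : ξ ∉ Ω := disjoint_left.1 (disjoint_frontier_iff_isOpen.2 hopen) hξ
  obtain ⟨nv, hnv, hflat⟩ := exists_isInwardNormal_eventually_inner_le hopen hconv hξ hsupp
  obtain ⟨Kf, hKf, hflim⟩ := hf.tendsto_exp_smul_sub hopen hconv hbdd hξΩ hfξ
  obtain ⟨Kg, hKg, hglim⟩ := hg.tendsto_exp_smul_sub hopen hconv hbdd hξΩ hgξ
  have hU : 0 < ⟪Kf • (f 0 - ξ), nv⟫ := by
    rw [real_inner_smul_left]; exact mul_pos hKf (hnv _ (hf.1 0))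
  have hV : 0 < ⟪Kg • (g 0 - ξ), nv⟫ := by
    rw [real_inner_smul_left]; exact mul_pos hKg (hnv _ (hg.1 0))
  -- shift `f` so that both rescaled limits have the same height above the support line
  set c := log (⟪Kf • (f 0 - ξ), nv⟫ / ⟪Kg • (g 0 - ξ), nv⟫)
  have hXnv : ⟪exp (-c) • Kf • (f 0 - ξ), nv⟫ = ⟪Kg • (g 0 - ξ), nv⟫ := by
    rw [real_inner_smul_left _ _ (exp (-c)), exp_neg, exp_log (div_pos hU hV)]
    field_simp
  have hfc := hfξ.comp (tendsto_atTop_add_const_right _ c tendsto_id)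
  refine ⟨c, tendsto_hilbertDist_nhds_zero hopen hconv hbdd (fun t => hf.1 _) hg.1 fun ρ hρ => ?_⟩
  exact (eventually_norm_sub_le_mul_norm_sub hflat (fun t => exp_pos t) hfc hgξ
    (tendsto_exp_smul_comp_add_const hflim c) hglim hXnv (hXnv ▸ hV) hρ).and
    (eventually_norm_sub_le_mul_norm_sub hflat (fun t => exp_pos t) hgξ hfc hglim
      (tendsto_exp_smul_comp_add_const hflim c) hXnv.symm hV hρ)
end

section
/- Let Ω ⊂ ℝ² be a bounded open convex set and let f, g be asymptotic geodesic lines of (Ω, h_Ω) with common boundary point ξ = f(+∞) = g(+∞) ∈ ∂Ω, with f and g contained in two distinct Euclidean lines. If Ω admits two distinct supporting lines at ξ, then the distance function is bounded away from 0 near infinity: there exist ε > 0 and T ∈ ℝ such that h_Ω(f(t), g(t)) ≥ ε for all t ≥ T. -/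
open Real Filter Set Metric

/-!
The two support lines at `ξ` bound a wedge `{⟪ν₁, x - ξ⟫ < 0, ⟪ν₂, x - ξ⟫ < 0}` containing `Ω`.
The endpoints of every chord of `Ω` lie in the closed wedge, and comparing the cross ratio with
the values of the two functionals gives `|log ρ q - log ρ p| ≤ h_Ω(p, q)` for
`ρ x = ⟪ν₁, x - ξ⟫ / ⟪ν₂, x - ξ⟫`. Being homogeneous of degree `0` in `x - ξ`, `ρ` is constant on
each line through `ξ`; since the support lines are distinct, it takes different values on distinct
lines through `ξ`. Both geodesics lie on lines through `ξ`, so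
`h_Ω(f t, g t) ≥ |log ρ (g 0) - log ρ (f 0)| > 0` for all `t`.
-/

open Bornology
open scoped RealInnerProductSpace

section NormedSpace

variable {E : Type*} [NormedAddCommGroup E] [NormedSpace ℝ E]

lemma eventually_lineMap_notMem_of_isBounded {Ω : Set E} (hbdd : IsBounded Ω) {p q : E}
    (hpq : p ≠ q) : ∀ᶠ r : ℝ in atTop, AffineMap.lineMap q p r ∉ Ω := by
  have hanti : AntilipschitzWith (nndist q p)⁻¹ (AffineMap.lineMap q p : ℝ → E) :=
    .of_le_mul_dist fun r s => by
      rw [dist_lineMap_lineMap, NNReal.coe_inv, coe_nndist, mul_comm (dist r s),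
        inv_mul_cancel_left₀ (dist_ne_zero.mpr hpq.symm)]
  have hatTop : atTop ≤ cobounded ℝ := by
    rw [IsOrderBornology.cobounded_eq]
    exact le_sup_right
  exact (hanti.tendsto_cobounded.mono_left hatTop).eventually (isBounded_def.mp hbdd)

theorem exists_mem_frontier_openSegment {Ω : Set E} (hopen : IsOpen Ω) (hbdd : IsBounded Ω)
    {p q : E} (hp : p ∈ Ω) (hpq : p ≠ q) : ∃ y ∈ frontier Ω, p ∈ openSegment ℝ y q := by
  set φ : ℝ → E := fun r => AffineMap.lineMap q p r
  have hφ : Continuous φ := AffineMap.lineMap_continuous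
  have hφ1 : φ 1 = p := AffineMap.lineMap_apply_one q p
  obtain ⟨M, hM, hM1⟩ :=
    ((eventually_lineMap_notMem_of_isBounded hbdd hpq).and (eventually_ge_atTop 1)).exists
  obtain ⟨r, hr, hrΩ⟩ : ∃ r ∈ Icc 1 M, φ r ∈ frontier Ω := by
    by_contra! h
    have hcover : Icc 1 M ⊆ φ ⁻¹' Ω ∪ φ ⁻¹' (closure Ω)ᶜ := fun r hr => by
      by_cases hrΩ : φ r ∈ Ω
      exacts [Or.inl hrΩ, Or.inr fun hcl => h r hr (hopen.frontier_eq ▸ ⟨hcl, hrΩ⟩)]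
    rcases isPreconnected_Icc.subset_or_subset (hopen.preimage hφ)
        (isClosed_closure.isOpen_compl.preimage hφ)
        ((disjoint_compl_right_iff_subset.mpr subset_closure).preimage φ) hcover with h | h
    · exact hM (h ⟨hM1, le_rfl⟩)
    · exact h ⟨le_rfl, hM1⟩ (subset_closure (hφ1 ▸ hp))
  have hr1 : 1 < r := hr.1.lt_of_ne fun h1 =>
    (hopen.inter_frontier_eq.subset ⟨hp, hφ1 ▸ h1 ▸ hrΩ⟩ : p ∈ (∅ : Set E))
  refine ⟨φ r, hrΩ, r⁻¹, 1 - r⁻¹, by positivity, by simp [inv_lt_one_of_one_lt₀ hr1], by ring, ?_⟩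
  simp only [φ, AffineMap.lineMap_apply_module]
  match_scalars <;> field_simp
  ring

lemma norm_eq_div_of_smul_eq {a : ℝ} {x y : E} (ha : 0 < a) (h : a • x = y) :
    ‖x‖ = ‖y‖ / a := by
  rw [← h, norm_smul, Real.norm_of_nonneg ha.le, mul_div_cancel_left₀ _ ha.ne']

lemma crossRatio_eq_of_combo {p q p' q' : E} {a b c d : ℝ} (ha : 0 < a) (hb : 0 < b)
    (hc : 0 < c) (hd : 0 < d) (hab : a + b = 1) (hcd : c + d = 1) (hp : a • p' + b • q = p)
    (hq : c • p + d • q' = q) (hpq : p ≠ q) :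
    ‖p' - q‖ * ‖q' - p‖ / (‖p' - p‖ * ‖q' - q‖) = (b * c)⁻¹ := by
  have h₁ : a • (p' - q) = p - q := by linear_combination (norm := module) hp - hab • q
  have h₂ : a • (p' - p) = b • (p - q) := by linear_combination (norm := module) hp - hab • p
  have h₃ : d • (q' - p) = q - p := by linear_combination (norm := module) hq - hcd • p
  have h₄ : d • (q' - q) = c • (q - p) := by linear_combination (norm := module) hq - hcd • q
  have hδ : ‖p - q‖ ≠ 0 := norm_ne_zero_iff.mpr (sub_ne_zero.mpr hpq)
  rw [norm_eq_div_of_smul_eq ha h₁, norm_eq_div_of_smul_eq ha h₂, norm_eq_div_of_smul_eq hd h₃,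
    norm_eq_div_of_smul_eq hd h₄, norm_smul, norm_smul, norm_sub_rev q p,
    Real.norm_of_nonneg hb.le, Real.norm_of_nonneg hc.le]
  field_simp

end NormedSpace

section InnerProductSpace

variable {E : Type*} [NormedAddCommGroup E] [InnerProductSpace ℝ E]

lemma inner_sub_le_of_combo {ν ξ p p' q : E} {a b : ℝ} (ha : 0 ≤ a) (hab : a + b = 1)
    (hp : a • p' + b • q = p) (hp' : ⟪ν, p' - ξ⟫ ≤ 0) : ⟪ν, p - ξ⟫ ≤ b * ⟪ν, q - ξ⟫ := by
  have hpξ : p - ξ = a • (p' - ξ) + b • (q - ξ) := by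
    linear_combination (norm := module) -hp + hab • ξ
  rw [hpξ, inner_add_right, inner_smul_right, inner_smul_right]
  linarith [mul_nonpos_of_nonneg_of_nonpos ha hp']

/-- The projective coordinate of the direction of `x - ξ` with respect to the lines
`⟪ν₁, · - ξ⟫ = 0` and `⟪ν₂, · - ξ⟫ = 0`. -/
noncomputable def wedgeSlope (ξ ν₁ ν₂ x : E) : ℝ :=
  ⟪ν₁, x - ξ⟫ / ⟪ν₂, x - ξ⟫

variable {ξ ν₁ ν₂ x y : E}

lemma wedgeSlope_comm (x : E) : wedgeSlope ξ ν₂ ν₁ x = (wedgeSlope ξ ν₁ ν₂ x)⁻¹ :=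
  (inv_div _ _).symm

lemma wedgeSlope_pos {Ω : Set E} (h₁ : ∀ x ∈ Ω, ⟪ν₁, x - ξ⟫ < 0)
    (h₂ : ∀ x ∈ Ω, ⟪ν₂, x - ξ⟫ < 0) (hx : x ∈ Ω) : 0 < wedgeSlope ξ ν₁ ν₂ x :=
  div_pos_of_neg_of_neg (h₁ x hx) (h₂ x hx)

lemma wedgeSlope_eq_of_sub_eq_smul {c : ℝ} (hc : c ≠ 0) (h : y - ξ = c • (x - ξ)) :
    wedgeSlope ξ ν₁ ν₂ y = wedgeSlope ξ ν₁ ν₂ x := by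
  rw [wedgeSlope, wedgeSlope, h, inner_smul_right, inner_smul_right, mul_div_mul_left _ _ hc]

end InnerProductSpace

section HilbertDist

variable {d : ℕ} {Ω : Set (EuclideanSpace ℝ (Fin d))} {ξ ν₁ ν₂ p q : EuclideanSpace ℝ (Fin d)}

theorem exists_hilbertDist_eq_log (hopen : IsOpen Ω) (hbdd : IsBounded Ω) (hp : p ∈ Ω)
    (hq : q ∈ Ω) (hpq : p ≠ q) :
    ∃ p' q', p' ∈ frontier Ω ∧ q' ∈ frontier Ω ∧ p ∈ openSegment ℝ p' q ∧
      q ∈ openSegment ℝ p q' ∧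
      hilbertDist Ω p q = log ((‖p' - q‖ * ‖q' - p‖) / (‖p' - p‖ * ‖q' - q‖)) := by
  obtain ⟨p', hp', hpp'⟩ := exists_mem_frontier_openSegment hopen hbdd hp hpq
  obtain ⟨q', hq', hqq'⟩ := exists_mem_frontier_openSegment hopen hbdd hq hpq.symm
  rw [openSegment_symm] at hqq'
  rw [hilbertDist, dif_neg hpq]
  exact Classical.epsilon_spec (p := fun δ => ∃ p' q' : EuclideanSpace ℝ (Fin d),
    p' ∈ frontier Ω ∧ q' ∈ frontier Ω ∧ p ∈ openSegment ℝ p' q ∧ q ∈ openSegment ℝ p q' ∧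
      δ = log ((‖p' - q‖ * ‖q' - p‖) / (‖p' - p‖ * ‖q' - q‖))) ⟨_, p', q', hp', hq', hpp', hqq', rfl⟩

lemma log_wedgeSlope_sub_le_hilbertDist (hopen : IsOpen Ω) (hbdd : IsBounded Ω)
    (h₁ : ∀ x ∈ Ω, ⟪ν₁, x - ξ⟫ < 0) (h₂ : ∀ x ∈ Ω, ⟪ν₂, x - ξ⟫ < 0) (hp : p ∈ Ω) (hq : q ∈ Ω) :
    log (wedgeSlope ξ ν₁ ν₂ q) - log (wedgeSlope ξ ν₁ ν₂ p) ≤ hilbertDist Ω p q := by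
  rcases eq_or_ne p q with rfl | hpq
  · simp [hilbertDist]
  obtain ⟨p', q', hp', hq', ⟨a, b, ha, hb, hab, hpp'⟩, ⟨c, e, hc, he, hce, hqq'⟩, hdist⟩ :=
    exists_hilbertDist_eq_log hopen hbdd hp hq hpq
  have hfrontier : ∀ {ν}, (∀ x ∈ Ω, ⟪ν, x - ξ⟫ < 0) → ∀ y ∈ frontier Ω, ⟪ν, y - ξ⟫ ≤ 0 :=
    fun hν y hy => closure_lt_subset_le (f := fun x => ⟪_, x - ξ⟫) (by fun_prop) continuous_const
      (closure_mono (fun x hx => hν x hx) (frontier_subset_closure hy))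
  have hA : ⟪ν₁, p - ξ⟫ ≤ b * ⟪ν₁, q - ξ⟫ :=
    inner_sub_le_of_combo ha.le hab hpp' (hfrontier h₁ p' hp')
  have hB : ⟪ν₂, q - ξ⟫ ≤ c * ⟪ν₂, p - ξ⟫ :=
    inner_sub_le_of_combo he.le (by linarith) ((add_comm _ _).trans hqq') (hfrontier h₂ q' hq')
  have hq₁ := h₁ q hq
  have hq₂ := h₂ q hq
  have key : b * c * (⟪ν₁, q - ξ⟫ * ⟪ν₂, p - ξ⟫) ≤ ⟪ν₁, p - ξ⟫ * ⟪ν₂, q - ξ⟫ :=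
    calc b * c * (⟪ν₁, q - ξ⟫ * ⟪ν₂, p - ξ⟫) = b * ⟪ν₁, q - ξ⟫ * (c * ⟪ν₂, p - ξ⟫) := by ring
      _ ≤ b * ⟪ν₁, q - ξ⟫ * ⟪ν₂, q - ξ⟫ :=
        mul_le_mul_of_nonpos_left hB (mul_neg_of_pos_of_neg hb hq₁).le
      _ ≤ ⟪ν₁, p - ξ⟫ * ⟪ν₂, q - ξ⟫ := mul_le_mul_of_nonpos_right hA hq₂.le
  rw [hdist, crossRatio_eq_of_combo ha hb hc he hab hce hpp' hqq' hpq, ← Real.log_div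
    (wedgeSlope_pos h₁ h₂ hq).ne' (wedgeSlope_pos h₁ h₂ hp).ne']
  refine Real.log_le_log (div_pos (wedgeSlope_pos h₁ h₂ hq) (wedgeSlope_pos h₁ h₂ hp)) ?_
  rw [wedgeSlope, wedgeSlope, div_div_div_eq, div_le_iff₀ (mul_pos_of_neg_of_neg hq₂ (h₁ p hp)),
    inv_mul_eq_div, le_div_iff₀ (mul_pos hb hc)]
  linarith

theorem abs_log_wedgeSlope_sub_le_hilbertDist (hopen : IsOpen Ω) (hbdd : IsBounded Ω)
    (h₁ : ∀ x ∈ Ω, ⟪ν₁, x - ξ⟫ < 0) (h₂ : ∀ x ∈ Ω, ⟪ν₂, x - ξ⟫ < 0) (hp : p ∈ Ω) (hq : q ∈ Ω) :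
    |log (wedgeSlope ξ ν₁ ν₂ q) - log (wedgeSlope ξ ν₁ ν₂ p)| ≤ hilbertDist Ω p q := by
  have h := log_wedgeSlope_sub_le_hilbertDist hopen hbdd h₂ h₁ hp hq
  rw [wedgeSlope_comm q, wedgeSlope_comm p, Real.log_inv, Real.log_inv] at h
  exact abs_le.mpr ⟨by linarith, log_wedgeSlope_sub_le_hilbertDist hopen hbdd h₁ h₂ hp hq⟩

end HilbertDist

lemma setOf_add_smul_eq_of_mem {K E : Type*} [Field K] [AddCommGroup E] [Module K E]
    {a v x w : E} (hx : ∃ t : K, x = a + t • v) (hxw : ∃ t : K, x + w = a + t • v) (hw : w ≠ 0) :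
    {y | ∃ t : K, y = a + t • v} = {y | ∃ t : K, y = x + t • w} := by
  obtain ⟨t₀, rfl⟩ := hx
  obtain ⟨t₁, ht₁⟩ := hxw
  have hw' : w = (t₁ - t₀) • v := by linear_combination (norm := module) ht₁
  have hc : t₁ - t₀ ≠ 0 := fun h => hw (by rw [hw', h, zero_smul])
  ext y
  constructor
  · rintro ⟨t, rfl⟩
    exact ⟨(t - t₀) / (t₁ - t₀), by rw [hw', smul_smul, div_mul_cancel₀ _ hc]; module⟩
  · rintro ⟨t, rfl⟩
    exact ⟨t₀ + t * (t₁ - t₀), by rw [hw']; module⟩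

namespace IsEuclideanLine

variable {d : ℕ} {L L' : Set (EuclideanSpace ℝ (Fin d))} {ξ ν₁ ν₂ x y : EuclideanSpace ℝ (Fin d)}

lemma eq_setOf_of_mem (hL : IsEuclideanLine L) (hx : x ∈ L) (hy : y ∈ L) (hxy : x ≠ y) :
    L = {z | ∃ t : ℝ, z = x + t • (y - x)} := by
  obtain ⟨a, v, -, rfl⟩ := hL
  exact setOf_add_smul_eq_of_mem hx (by rwa [add_sub_cancel]) (sub_ne_zero.mpr hxy.symm)

lemma eq_of_mem (hL : IsEuclideanLine L) (hL' : IsEuclideanLine L') (hx : x ∈ L) (hy : y ∈ L)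
    (hx' : x ∈ L') (hy' : y ∈ L') (hxy : x ≠ y) : L = L' :=
  (hL.eq_setOf_of_mem hx hy hxy).trans (hL'.eq_setOf_of_mem hx' hy' hxy).symm

lemma isClosed (hL : IsEuclideanLine L) : IsClosed L := by
  obtain ⟨a, v, -, rfl⟩ := hL
  have hpre : {x | ∃ t : ℝ, x = a + t • v} = (· - a) ⁻¹' (ℝ ∙ v) := by
    ext x
    simp only [mem_ofPred_eq, mem_preimage, SetLike.mem_coe, Submodule.mem_span_singleton,
      eq_sub_iff_add_eq, add_comm a, eq_comm]
  exact hpre ▸ (Submodule.closed_of_finiteDimensional _).preimage (by fun_prop)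

lemma wedgeSlope_eq (hL : IsEuclideanLine L) (hξ : ξ ∈ L) (hx : x ∈ L) (hy : y ∈ L)
    (hxξ : x ≠ ξ) (hyξ : y ≠ ξ) : wedgeSlope ξ ν₁ ν₂ y = wedgeSlope ξ ν₁ ν₂ x := by
  obtain ⟨c, hc⟩ : ∃ c : ℝ, y = ξ + c • (x - ξ) := (hL.eq_setOf_of_mem hξ hx hxξ.symm).subset hy
  have hc0 : c ≠ 0 := by
    rintro rfl
    exact hyξ (by simpa using hc)
  exact wedgeSlope_eq_of_sub_eq_smul hc0 (by rw [hc, add_sub_cancel_left])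

variable {S₁ S₂ : Set (EuclideanSpace ℝ (Fin d))} (hS₁ : IsEuclideanLine S₁)
  (hS₂ : IsEuclideanLine S₂) (hS : S₁ ≠ S₂) (hν₁ : S₁ = {z | ⟪ν₁, z - ξ⟫ = 0})
  (hν₂ : S₂ = {z | ⟪ν₂, z - ξ⟫ = 0})
include hS₁ hS₂ hS hν₁ hν₂

lemma eq_zero_of_inner_eq_zero {w : EuclideanSpace ℝ (Fin d)} (hw₁ : ⟪ν₁, w⟫ = 0)
    (hw₂ : ⟪ν₂, w⟫ = 0) : w = 0 := by
  by_contra hw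
  refine hS (hS₁.eq_of_mem hS₂ (x := ξ) (y := ξ + w) ?_ ?_ ?_ ?_ (by simpa using hw))
  all_goals simp [hν₁, hν₂, hw₁, hw₂]

lemma mem_of_wedgeSlope_eq (hL : IsEuclideanLine L) (hξ : ξ ∈ L) (hy : y ∈ L)
    (hy₁ : ⟪ν₁, y - ξ⟫ ≠ 0) (hx₂ : ⟪ν₂, x - ξ⟫ ≠ 0) (hy₂ : ⟪ν₂, y - ξ⟫ ≠ 0)
    (h : wedgeSlope ξ ν₁ ν₂ x = wedgeSlope ξ ν₁ ν₂ y) : x ∈ L := by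
  set w := ⟪ν₁, y - ξ⟫ • (x - ξ) - ⟪ν₁, x - ξ⟫ • (y - ξ)
  have hw₁ : ⟪ν₁, w⟫ = 0 := by
    rw [inner_sub_right, inner_smul_right, inner_smul_right]
    ring
  have hw₂ : ⟪ν₂, w⟫ = 0 := by
    rw [wedgeSlope, wedgeSlope, div_eq_div_iff hx₂ hy₂] at h
    rw [inner_sub_right, inner_smul_right, inner_smul_right]
    linear_combination -h
  have hw := sub_eq_zero.mp (eq_zero_of_inner_eq_zero hS₁ hS₂ hS hν₁ hν₂ hw₁ hw₂)
  rw [hL.eq_setOf_of_mem hξ hy fun h => hy₁ (by simp [← h])]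
  refine ⟨⟪ν₁, x - ξ⟫ / ⟪ν₁, y - ξ⟫, ?_⟩
  rw [div_eq_inv_mul, mul_smul, ← hw, inv_smul_smul₀ hy₁, add_sub_cancel]

end IsEuclideanLine

lemma exists_inner_eq_zero_iff_exists_eq_smul {E : Type*} [NormedAddCommGroup E]
    [InnerProductSpace ℝ E] (hE : Module.finrank ℝ E = 2) {v : E} (hv : v ≠ 0) :
    ∃ ν : E, ∀ y, ⟪ν, y⟫ = 0 ↔ ∃ t : ℝ, y = t • v := by
  have : Fact (Module.finrank ℝ E = 1 + 1) := ⟨hE⟩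
  have : FiniteDimensional ℝ E := .of_fact_finrank_eq_succ 1
  have hK := Submodule.finrank_orthogonal_span_singleton (𝕜 := ℝ) (n := 1) hv
  obtain ⟨w, hw, -⟩ := finrank_eq_one_iff'.mp hK
  have hKw := eq_span_singleton_of_mem_of_finrank_eq_one hK w.2 (by simpa using hw)
  refine ⟨w, fun y => ?_⟩
  rw [← Submodule.mem_orthogonal_singleton_iff_inner_right, ← hKw,
    Submodule.orthogonal_orthogonal, Submodule.mem_span_singleton]
  exact exists_congr fun t => eq_comm

lemma IsSupportLine.exists_normal {Ω : Set (EuclideanSpace ℝ (Fin 2))}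
    {ξ : EuclideanSpace ℝ (Fin 2)} {S : Set (EuclideanSpace ℝ (Fin 2))}
    (hS : IsSupportLine Ω ξ S) (hconv : Convex ℝ Ω) :
    ∃ ν, S = {x | ⟪ν, x - ξ⟫ = 0} ∧ ∀ x ∈ Ω, ⟪ν, x - ξ⟫ < 0 := by
  obtain ⟨⟨a, v, hv, rfl⟩, hξ, hdisj⟩ := hS
  obtain ⟨ν, hν⟩ := exists_inner_eq_zero_iff_exists_eq_smul finrank_euclideanSpace_fin hv
  have hS : {x | ∃ t : ℝ, x = a + t • v} = {x | ⟪ν, x - ξ⟫ = 0} := by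
    obtain ⟨t, ht⟩ := id hξ
    rw [setOf_add_smul_eq_of_mem hξ ⟨t + 1, by rw [ht]; module⟩ hv]
    ext x
    simp only [mem_ofPred_eq, hν, ← sub_eq_iff_eq_add']
  have hcover : Ω ⊆ {x | ⟪ν, x - ξ⟫ < 0} ∪ {x | 0 < ⟪ν, x - ξ⟫} := fun x hx =>
    lt_or_gt_of_ne fun h => (hdisj.subset ⟨hS ▸ h, hx⟩ : x ∈ (∅ : Set _))
  rcases hconv.isPreconnected.subset_or_subset (isOpen_lt (by fun_prop) continuous_const)
    (isOpen_lt continuous_const (by fun_prop))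
    (disjoint_left.mpr fun x (h : _ < _) (h' : _ < _) => h.not_gt h') hcover with h | h
  · exact ⟨ν, hS, h⟩
  · refine ⟨-ν, ?_, fun x hx => ?_⟩
    · simp only [hS, inner_neg_left, neg_eq_zero]
    · simpa [inner_neg_left] using h hx

theorem nonsmooth_boundary_distance_bounded_away_from_zero_general
    (Ω : Set (EuclideanSpace ℝ (Fin 2)))
    (hopen : IsOpen Ω) (hconv : Convex ℝ Ω) (hbdd : Bornology.IsBounded Ω)
    (f g : ℝ → EuclideanSpace ℝ (Fin 2)) (ξ : EuclideanSpace ℝ (Fin 2))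
    (hf : IsGeodesicLine Ω f) (hg : IsGeodesicLine Ω g)
    (hfξ : Tendsto f atTop (nhds ξ)) (hgξ : Tendsto g atTop (nhds ξ))
    (hdistinct : ∃ L₁ L₂ : Set (EuclideanSpace ℝ (Fin 2)),
      IsEuclideanLine L₁ ∧ IsEuclideanLine L₂ ∧
      Set.range f ⊆ L₁ ∧ Set.range g ⊆ L₂ ∧ L₁ ≠ L₂)
    (hsupp : ∃ L₁ L₂ : Set (EuclideanSpace ℝ (Fin 2)),
      IsSupportLine Ω ξ L₁ ∧ IsSupportLine Ω ξ L₂ ∧ L₁ ≠ L₂) :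
    ∃ ε > 0, ∃ T : ℝ, ∀ t ≥ T, ε ≤ hilbertDist Ω (f t) (g t) := by
  obtain ⟨Lf, Lg, hLf, hLg, hfL, hgL, hLfg⟩ := hdistinct
  obtain ⟨S₁, S₂, hS₁, hS₂, hS₁₂⟩ := hsupp
  obtain ⟨ν₁, hν₁S, hν₁⟩ := hS₁.exists_normal hconv
  obtain ⟨ν₂, hν₂S, hν₂⟩ := hS₂.exists_normal hconv
  replace hfL : ∀ t, f t ∈ Lf := fun t => hfL (mem_range_self t)
  replace hgL : ∀ t, g t ∈ Lg := fun t => hgL (mem_range_self t)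
  have hξf : ξ ∈ Lf := hLf.isClosed.mem_of_tendsto hfξ (.of_forall hfL)
  have hξg : ξ ∈ Lg := hLg.isClosed.mem_of_tendsto hgξ (.of_forall hgL)
  have hne : ∀ {x}, x ∈ Ω → x ≠ ξ := fun hx h => (hν₁ _ hx).ne (by simp [h])
  set ρ := wedgeSlope ξ ν₁ ν₂
  have hρf : ∀ t, ρ (f t) = ρ (f 0) := fun t =>
    hLf.wedgeSlope_eq hξf (hfL 0) (hfL t) (hne (hf.1 0)) (hne (hf.1 t))
  have hρg : ∀ t, ρ (g t) = ρ (g 0) := fun t =>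
    hLg.wedgeSlope_eq hξg (hgL 0) (hgL t) (hne (hg.1 0)) (hne (hg.1 t))
  have hρ : ρ (f 0) ≠ ρ (g 0) := fun h => hLfg <| hLf.eq_of_mem hLg hξf (hfL 0) hξg
    (IsEuclideanLine.mem_of_wedgeSlope_eq hS₁.1 hS₂.1 hS₁₂ hν₁S hν₂S hLg hξg (hgL 0)
      (hν₁ _ (hg.1 0)).ne (hν₂ _ (hf.1 0)).ne (hν₂ _ (hg.1 0)).ne h) (hne (hf.1 0)).symm
  have hlog : log (ρ (g 0)) ≠ log (ρ (f 0)) := fun h => hρ <|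
    Real.log_injOn_pos (wedgeSlope_pos hν₁ hν₂ (hf.1 0)) (wedgeSlope_pos hν₁ hν₂ (hg.1 0)) h.symm
  refine ⟨|log (ρ (g 0)) - log (ρ (f 0))|, abs_pos.mpr (sub_ne_zero.mpr hlog), 0, fun t _ => ?_⟩
  rw [← hρf t, ← hρg t]
  exact abs_log_wedgeSlope_sub_le_hilbertDist hopen hbdd hν₁ hν₂ (hf.1 t) (hg.1 t)

theorem nonsmooth_boundary_distance_bounded_away_from_zero
    (Ω : Set (EuclideanSpace ℝ (Fin 2)))
    (hopen : IsOpen Ω) (hconv : Convex ℝ Ω) (hbdd : Bornology.IsBounded Ω)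
    (f g : ℝ → EuclideanSpace ℝ (Fin 2)) (ξ : EuclideanSpace ℝ (Fin 2))
    (hf : IsGeodesicLine Ω f) (hg : IsGeodesicLine Ω g)
    (hξ : ξ ∈ frontier Ω)
    (hfξ : Tendsto f atTop (nhds ξ)) (hgξ : Tendsto g atTop (nhds ξ))
    (hdistinct : ∃ L₁ L₂ : Set (EuclideanSpace ℝ (Fin 2)),
      IsEuclideanLine L₁ ∧ IsEuclideanLine L₂ ∧
      Set.range f ⊆ L₁ ∧ Set.range g ⊆ L₂ ∧ L₁ ≠ L₂)
    (hsupp : ∃ L₁ L₂ : Set (EuclideanSpace ℝ (Fin 2)),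
      IsSupportLine Ω ξ L₁ ∧ IsSupportLine Ω ξ L₂ ∧ L₁ ≠ L₂) :
    ∃ ε > 0, ∃ T : ℝ, ∀ t ≥ T, ε ≤ hilbertDist Ω (f t) (g t) :=
  nonsmooth_boundary_distance_bounded_away_from_zero_general Ω hopen hconv hbdd f g ξ hf hg hfξ hgξ
    hdistinct hsupp
end

section
/- Let α, β be real numbers with β > 0 and set E(t) = 1/(e^t + 1). Then there exists T > 0 such that the function φ : [T, +∞) → ℝ defined by φ(t) = log( (β + (α + 1/2)·E(t)) / (β + (α − 1/2)·E(t)) ) is convex on [T, +∞). -/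
open Real Filter Set

theorem eventually_convex_log_ratio (α β : ℝ) (hβ : 0 < β)
    (E : ℝ → ℝ) (hE : E = fun t => 1 / (Real.exp t + 1)) :
    ∃ T > (0 : ℝ), ConvexOn ℝ (Set.Ici T)
      (fun t => Real.log ((β + (α + 1 / 2) * E t) / (β + (α - 1 / 2) * E t))) := by
  set a : ℝ := β + α + 1 / 2 with ha
  set b : ℝ := β + α - 1 / 2 with hb
  have hab : a = b + 1 := by rw [ha, hb]; ring
  set c : ℝ := 1 + |a| + |b| with hc
  have h1c : (1:ℝ) ≤ c := by
    have := abs_nonneg a; have := abs_nonneg b; simp only [hc]; linarith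
  set T : ℝ := max 1 (Real.log (c / β)) with hT
  have hT0 : (0:ℝ) < T := lt_of_lt_of_le one_pos (le_max_left _ _)
  have hc0 : (0:ℝ) < c := lt_of_lt_of_le one_pos h1c
  -- key bound : for t ≥ T, c ≤ β * exp t
  have hkey : ∀ t, T ≤ t → c ≤ β * Real.exp t := by
    intro t ht
    have h1 : Real.log (c / β) ≤ t := le_trans (le_max_right _ _) ht
    have h2 : c / β ≤ Real.exp t := by
      calc c / β = Real.exp (Real.log (c / β)) := (Real.exp_log (by positivity)).symm
        _ ≤ Real.exp t := Real.exp_le_exp.mpr h1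
    calc c = β * (c / β) := by field_simp
      _ ≤ β * Real.exp t := by nlinarith
  have hpa : ∀ t, T ≤ t → 1 ≤ β * Real.exp t + a := by
    intro t ht
    have := hkey t ht
    have h2 : -|a| ≤ a := neg_abs_le a
    have h3 : (0:ℝ) ≤ |b| := abs_nonneg b
    simp only [hc] at this; linarith
  have hpb : ∀ t, T ≤ t → 1 ≤ β * Real.exp t + b := by
    intro t ht
    have := hkey t ht
    have h2 : -|b| ≤ b := neg_abs_le b
    have h3 : (0:ℝ) ≤ |a| := abs_nonneg a
    simp only [hc] at this; linarith
  have habc : a * b ≤ c * c := by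
    calc a * b ≤ |a| * |b| := by
          rw [← abs_mul]; exact le_abs_self _
      _ ≤ c * c := by
          have := abs_nonneg a; have := abs_nonneg b
          have h1 : |a| ≤ c := by simp only [hc]; linarith
          have h2 : |b| ≤ c := by simp only [hc]; linarith
          nlinarith
  set f : ℝ → ℝ := fun t => Real.log (β * Real.exp t + a) - Real.log (β * Real.exp t + b)
    with hf
  -- derivative of f
  have hder : ∀ t, T ≤ t →
      HasDerivAt f (-(β * Real.exp t) /
        ((β * Real.exp t + a) * (β * Real.exp t + b))) t := by
    intro t ht
    have hua : HasDerivAt (fun s => β * Real.exp s + a) (β * Real.exp t) t :=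
      ((Real.hasDerivAt_exp t).const_mul β).add_const a
    have hub : HasDerivAt (fun s => β * Real.exp s + b) (β * Real.exp t) t :=
      ((Real.hasDerivAt_exp t).const_mul β).add_const b
    have h1 : (0:ℝ) < β * Real.exp t + a := lt_of_lt_of_le one_pos (hpa t ht)
    have h2 : (0:ℝ) < β * Real.exp t + b := lt_of_lt_of_le one_pos (hpb t ht)
    have hla := hua.log (ne_of_gt h1)
    have hlb := hub.log (ne_of_gt h2)
    have heq : β * Real.exp t / (β * Real.exp t + a) - β * Real.exp t / (β * Real.exp t + b)
        = -(β * Real.exp t) / ((β * Real.exp t + a) * (β * Real.exp t + b)) := by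
      rw [div_sub_div _ _ (ne_of_gt h1) (ne_of_gt h2), hab]
      ring_nf
    exact heq ▸ (hla.sub hlb)
  have hint : interior (Set.Ici T) = Set.Ioi T := interior_Ici
  have hconvf : ConvexOn ℝ (Set.Ici T) f := by
    apply MonotoneOn.convexOn_of_deriv (convex_Ici T)
    · intro t ht
      exact (hder t ht).continuousAt.continuousWithinAt
    · rw [hint]
      intro t ht
      exact (hder t (le_of_lt ht)).differentiableAt.differentiableWithinAt
    · rw [hint]
      intro s hs t ht hst
      rw [(hder s (le_of_lt hs)).deriv, (hder t (le_of_lt ht)).deriv]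
      set u : ℝ := β * Real.exp s with hu
      set w : ℝ := β * Real.exp t with hw
      have hcu : c ≤ u := hkey s (le_of_lt hs)
      have hcw : c ≤ w := hkey t (le_of_lt ht)
      have huw : u ≤ w := by
        simp only [hu, hw]
        exact mul_le_mul_of_nonneg_left (Real.exp_le_exp.mpr hst) (le_of_lt hβ)
      have h1 : (0:ℝ) < u + a := lt_of_lt_of_le one_pos (hpa s (le_of_lt hs))
      have h2 : (0:ℝ) < u + b := lt_of_lt_of_le one_pos (hpb s (le_of_lt hs))
      have h3 : (0:ℝ) < w + a := lt_of_lt_of_le one_pos (hpa t (le_of_lt ht))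
      have h4 : (0:ℝ) < w + b := lt_of_lt_of_le one_pos (hpb t (le_of_lt ht))
      rw [div_le_div_iff₀ (by positivity) (by positivity)]
      have hab2 : a * b ≤ u * w := by nlinarith
      nlinarith [mul_nonneg (sub_nonneg.mpr huw) (sub_nonneg.mpr hab2)]
  refine ⟨T, hT0, hconvf.congr ?_⟩
  intro t ht
  simp only [Set.mem_Ici] at ht
  have he1 : (0:ℝ) < Real.exp t + 1 := by positivity
  have h1 : (0:ℝ) < β * Real.exp t + a := lt_of_lt_of_le one_pos (hpa t ht)
  have h2 : (0:ℝ) < β * Real.exp t + b := lt_of_lt_of_le one_pos (hpb t ht)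
  have hX : β + (α + 1 / 2) * E t = (β * Real.exp t + a) / (Real.exp t + 1) := by
    rw [hE]; simp only [ha]; field_simp; ring
  have hY : β + (α - 1 / 2) * E t = (β * Real.exp t + b) / (Real.exp t + 1) := by
    rw [hE]; simp only [hb]; field_simp; ring
  simp only [hf]
  have hq : (β * Real.exp t + a) / (Real.exp t + 1) / ((β * Real.exp t + b) / (Real.exp t + 1))
      = (β * Real.exp t + a) / (β * Real.exp t + b) := by
    rw [div_div_div_eq]; rw [mul_comm (β * Real.exp t + a) (Real.exp t + 1), mul_div_mul_left _ _ (ne_of_gt he1)]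
  rw [hX, hY, hq, Real.log_div (ne_of_gt h1) (ne_of_gt h2)]
end

section
/- Let [α, β] be a nondegenerate interval (α < β) and let α⁽⁰⁾, α⁽¹⁾, α⁽²⁾, β⁽⁰⁾, β⁽¹⁾, β⁽²⁾ be positive real numbers satisfying 0 < α⁽⁰⁾ < β⁽⁰⁾, 0 < α⁽¹⁾ < β⁽¹⁾, and α⁽¹⁾·(β − α) < β⁽⁰⁾ − α⁽⁰⁾ < β⁽¹⁾·(β − α). Then there exists a twice continuously differentiable function σ : [α, β] → [α⁽⁰⁾, β⁽⁰⁾] such that σ(α) = α⁽⁰⁾, σ′(α) = α⁽¹⁾, σ″(α) = α⁽²⁾, σ(β) = β⁽⁰⁾, σ′(β) = β⁽¹⁾, σ″(β) = β⁽²⁾, and σ″(x) > 0 for all x ∈ (α, β). -/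
/-!
After the affine change of variables `x = α + (β - α) u` it suffices to find `P` on `[0, 1]` with
prescribed values of `P, P', P''` at both ends and `P'' > 0` on `(0, 1)`. With `P(0) = 0`, the
conditions at `1` say that `g = P''` has the prescribed moments `∫ (1 - u) g = P(1) - P'(0) = J` and
`∫ u g = P'(1) - P(1) = K`, both positive. Take
`g(u) = (1 - u)ⁿ (s₀ + C u) + uⁿ (s₁ + D (1 - u))`: for large `n` the terms carrying the endpoint values
`s₀, s₁` have negligible moments, while the two bumps have moment ratios `(n + 1) / 2` and
`2 / (n + 1)`, so `C, D ≥ 0` can be solved for. Finally `σ'' > 0` makes `σ' ≥ σ'(α) > 0`, so `σ`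
increases from `a0` to `b0`.
-/

open Set Filter

noncomputable section

namespace ConvexHermite

def bump (n : ℕ) (s D u : ℝ) : ℝ := u ^ n * (s + D * (1 - u))

def bumpPrimitive (n : ℕ) (s D u : ℝ) : ℝ :=
  (s + D) / (n + 1) * u ^ (n + 1) - D / (n + 2) * u ^ (n + 2)

def bumpPrimitive₂ (n : ℕ) (s D u : ℝ) : ℝ :=
  (s + D) / ((n + 1) * (n + 2)) * u ^ (n + 2) - D / ((n + 2) * (n + 3)) * u ^ (n + 3)

section Bump

variable (n : ℕ) (s D : ℝ)

lemma hasDerivAt_bumpPrimitive (u : ℝ) :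
    HasDerivAt (bumpPrimitive n s D) (bump n s D u) u := by
  refine (((hasDerivAt_pow (n + 1) u).const_mul ((s + D) / (n + 1))).fun_sub
    ((hasDerivAt_pow (n + 2) u).const_mul (D / (n + 2)))).congr_deriv ?_
  simp only [bump, Nat.reduceSubDiff, Nat.cast_add, Nat.cast_ofNat]
  field_simp
  ring

lemma hasDerivAt_bumpPrimitive₂ (u : ℝ) :
    HasDerivAt (bumpPrimitive₂ n s D) (bumpPrimitive n s D u) u := by
  refine (((hasDerivAt_pow (n + 2) u).const_mul ((s + D) / ((n + 1) * (n + 2)))).fun_sub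
    ((hasDerivAt_pow (n + 3) u).const_mul (D / ((n + 2) * (n + 3))))).congr_deriv ?_
  simp only [bumpPrimitive, Nat.reduceSubDiff, Nat.cast_add, Nat.cast_ofNat]
  field_simp

@[simp]
lemma bumpPrimitive_zero : bumpPrimitive n s D 0 = 0 := by
  simp [bumpPrimitive]

@[simp]
lemma bumpPrimitive₂_zero : bumpPrimitive₂ n s D 0 = 0 := by
  simp [bumpPrimitive₂]

lemma bump_pos (hs : 0 < s) (hD : 0 ≤ D) {u : ℝ} (hu₀ : 0 < u) (hu₁ : u ≤ 1) :
    0 < bump n s D u := by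
  have : 0 ≤ D * (1 - u) := mul_nonneg hD (by linarith)
  unfold bump
  positivity

/- The moments `∫₀¹ (1 - u) bump` and `∫₀¹ u bump`; the scaling of `D` makes them affine in `c`
with slopes `2` and `n + 1`. -/
lemma bumpPrimitive₂_one (c : ℝ) :
    bumpPrimitive₂ n s ((n + 1) * (n + 2) * (n + 3) * c) 1 = s / ((n + 1) * (n + 2)) + 2 * c := by
  simp only [bumpPrimitive₂, one_pow, mul_one]
  field_simp
  ring

lemma bumpPrimitive_one_sub_bumpPrimitive₂_one (c : ℝ) :
    bumpPrimitive n s ((n + 1) * (n + 2) * (n + 3) * c) 1 -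
      bumpPrimitive₂ n s ((n + 1) * (n + 2) * (n + 3) * c) 1 = s / (n + 2) + (n + 1) * c := by
  simp only [bumpPrimitive, bumpPrimitive₂, one_pow, mul_one]
  field_simp
  ring

end Bump

def profile (n : ℕ) (d₀ s₀ C s₁ D u : ℝ) : ℝ :=
  d₀ * u + (bumpPrimitive₂ n s₀ C (1 - u) - bumpPrimitive₂ n s₀ C 1 + bumpPrimitive n s₀ C 1 * u)
    + bumpPrimitive₂ n s₁ D u

section Profile

variable (n : ℕ) (d₀ s₀ C s₁ D : ℝ)

lemma contDiff_profile {m : WithTop ℕ∞} : ContDiff ℝ m (profile n d₀ s₀ C s₁ D) := by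
  unfold profile bumpPrimitive₂
  fun_prop

lemma deriv_profile : deriv (profile n d₀ s₀ C s₁ D) = fun u =>
    d₀ + (bumpPrimitive n s₀ C 1 - bumpPrimitive n s₀ C (1 - u)) + bumpPrimitive n s₁ D u := by
  funext u
  refine HasDerivAt.deriv ?_
  have h := (((hasDerivAt_id u).const_mul d₀).fun_add
    ((((hasDerivAt_bumpPrimitive₂ n s₀ C (1 - u)).comp_const_sub 1 u).sub_const
      (bumpPrimitive₂ n s₀ C 1)).fun_add ((hasDerivAt_id u).const_mul (bumpPrimitive n s₀ C 1)))).fun_add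
    (hasDerivAt_bumpPrimitive₂ n s₁ D u)
  exact h.congr_deriv (by simp only [mul_one]; ring)

lemma deriv_deriv_profile : deriv (deriv (profile n d₀ s₀ C s₁ D)) = fun u =>
    bump n s₀ C (1 - u) + bump n s₁ D u := by
  rw [deriv_profile]
  funext u
  refine HasDerivAt.deriv ?_
  have h := ((hasDerivAt_const u d₀).fun_add ((hasDerivAt_const u (bumpPrimitive n s₀ C 1)).fun_sub
    ((hasDerivAt_bumpPrimitive n s₀ C (1 - u)).comp_const_sub 1 u))).fun_add
    (hasDerivAt_bumpPrimitive n s₁ D u)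
  exact h.congr_deriv (by ring)

end Profile

lemma exists_nonneg_symm_system_solution {N J K : ℝ} (hN : 2 < N) (hJ : 2 * K ≤ N * J)
    (hK : 2 * J ≤ N * K) :
    ∃ c d : ℝ, 0 ≤ c ∧ 0 ≤ d ∧ N * c + 2 * d = J ∧ 2 * c + N * d = K := by
  have hdet : 0 < N ^ 2 - 4 := by nlinarith
  refine ⟨(N * J - 2 * K) / (N ^ 2 - 4), (N * K - 2 * J) / (N ^ 2 - 4),
    div_nonneg (by linarith) hdet.le, div_nonneg (by linarith) hdet.le, ?_, ?_⟩ <;>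
  · field_simp
    ring

lemma exists_bump_coeffs {s₀ s₁ J K : ℝ} (hs₀ : 0 ≤ s₀) (hs₁ : 0 ≤ s₁) (hJ : 0 < J)
    (hK : 0 < K) :
    ∃ n : ℕ, n ≠ 0 ∧ ∃ c d : ℝ, 0 ≤ c ∧ 0 ≤ d ∧
      s₀ / (n + 2) + (n + 1) * c + (s₁ / ((n + 1) * (n + 2)) + 2 * d) = J ∧
      s₀ / ((n + 1) * (n + 2)) + 2 * c + (s₁ / (n + 2) + (n + 1) * d) = K := by
  obtain ⟨n, hn, hnJ, hnK⟩ := ((eventually_ge_atTop 2).and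
    (((tendsto_natCast_atTop_atTop (R := ℝ)).eventually_ge_atTop ((2 * K + (s₀ + s₁)) / J)).and
      ((tendsto_natCast_atTop_atTop (R := ℝ)).eventually_ge_atTop ((2 * J + (s₀ + s₁)) / K)))).exists
  rw [div_le_iff₀ hJ] at hnJ
  rw [div_le_iff₀ hK] at hnK
  have tail_le : ∀ a b : ℝ, 0 ≤ a → 0 ≤ b →
      (n + 1) * (a / (n + 2) + b / ((n + 1) * (n + 2))) ≤ a + b := by
    intro a b ha hb
    rw [show (n + 1) * (a / (n + 2) + b / ((n + 1) * (n + 2))) = ((n + 1) * a + b) / (n + 2) by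
      field_simp, div_le_iff₀ (by positivity)]
    nlinarith
  have tail₀ := tail_le s₀ s₁ hs₀ hs₁
  have tail₁ := tail_le s₁ s₀ hs₁ hs₀
  have tail₀_nonneg : 0 ≤ s₀ / (n + 2) + s₁ / ((n + 1) * (n + 2)) := by positivity
  have tail₁_nonneg : 0 ≤ s₁ / (n + 2) + s₀ / ((n + 1) * (n + 2)) := by positivity
  have hn' : (2 : ℝ) < n + 1 := by norm_cast; omega
  obtain ⟨c, d, hc, hd, hcJ, hdK⟩ := exists_nonneg_symm_system_solution (N := n + 1)
    (J := J - (s₀ / (n + 2) + s₁ / ((n + 1) * (n + 2))))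
    (K := K - (s₁ / (n + 2) + s₀ / ((n + 1) * (n + 2)))) hn'
    (by rw [mul_sub]; linarith) (by rw [mul_sub]; linarith)
  exact ⟨n, by omega, c, d, hc, hd, by linarith, by linarith⟩

theorem exists_unitInterval_interpolation {d₀ v₁ d₁ s₀ s₁ : ℝ} (hs₀ : 0 < s₀) (hs₁ : 0 < s₁)
    (h₀ : d₀ < v₁) (h₁ : v₁ < d₁) :
    ∃ P : ℝ → ℝ, ContDiff ℝ 2 P ∧ P 0 = 0 ∧ deriv P 0 = d₀ ∧ deriv (deriv P) 0 = s₀ ∧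
      P 1 = v₁ ∧ deriv P 1 = d₁ ∧ deriv (deriv P) 1 = s₁ ∧
      ∀ u ∈ Ioo (0 : ℝ) 1, 0 < deriv (deriv P) u := by
  obtain ⟨n, hn0, c, d, hc, hd, hJ, hK⟩ :=
    exists_bump_coeffs hs₀.le hs₁.le (sub_pos.2 h₀) (sub_pos.2 h₁)
  have hmom₀ := bumpPrimitive_one_sub_bumpPrimitive₂_one n s₀ c
  have hmom₀' := bumpPrimitive₂_one n s₀ c
  have hmom₁ := bumpPrimitive_one_sub_bumpPrimitive₂_one n s₁ d
  have hmom₁' := bumpPrimitive₂_one n s₁ d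
  refine ⟨profile n d₀ s₀ ((n + 1) * (n + 2) * (n + 3) * c) s₁ ((n + 1) * (n + 2) * (n + 3) * d),
    contDiff_profile .., by simp [profile], by simp [deriv_profile],
    by simp [deriv_deriv_profile, bump, hn0], ?_, ?_, by simp [deriv_deriv_profile, bump, hn0], ?_⟩
  · simp only [profile, sub_self, bumpPrimitive₂_zero]
    linarith
  · simp only [deriv_profile, sub_self, bumpPrimitive_zero]
    linarith
  · intro u ⟨hu₀, hu₁⟩
    rw [deriv_deriv_profile]
    exact add_pos (bump_pos n _ _ hs₀ (by positivity) (by linarith) (by linarith))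
      (bump_pos n _ _ hs₁ (by positivity) hu₀ hu₁.le)

lemma monotoneOn_Icc_of_deriv_nonneg_of_deriv_deriv_nonneg {f : ℝ → ℝ} {a b : ℝ}
    (hf : Differentiable ℝ f) (hf' : Differentiable ℝ (deriv f)) (ha : 0 ≤ deriv f a)
    (hf'' : ∀ x ∈ Ioo a b, 0 ≤ deriv (deriv f) x) : MonotoneOn f (Icc a b) := by
  have hmono : MonotoneOn (deriv f) (Icc a b) :=
    monotoneOn_of_deriv_nonneg (convex_Icc a b) hf'.continuous.continuousOn hf'.differentiableOn
      (by rwa [interior_Icc])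
  refine monotoneOn_of_deriv_nonneg (convex_Icc a b) hf.continuous.continuousOn hf.differentiableOn ?_
  rw [interior_Icc]
  intro x hx
  exact ha.trans (hmono (left_mem_Icc.2 (hx.1.trans hx.2).le) (Ioo_subset_Icc_self hx) hx.1.le)

lemma deriv_const_mul_comp_sub_div (f : ℝ → ℝ) (c a L : ℝ) :
    deriv (fun x => c * f ((x - a) / L)) = fun x => c / L * deriv f ((x - a) / L) := by
  rw [deriv_const_mul_field']
  funext x
  simp only [div_eq_inv_mul]
  rw [deriv_comp_sub_const (fun y => f (L⁻¹ * y)), deriv_comp_mul_left, smul_eq_mul]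
  ring

end ConvexHermite

end

open ConvexHermite in
theorem c2_interpolation_with_positive_second_derivative_general
    (α β a0 a1 a2 b0 b1 b2 : ℝ) (hαβ : α < β)
    (ha1 : 0 < a1) (ha2 : 0 < a2)
    (hb2 : 0 < b2)
    (hlow : a1 * (β - α) < b0 - a0) (hhigh : b0 - a0 < b1 * (β - α)) :
    ∃ (s : Set ℝ) (σ : ℝ → ℝ), IsOpen s ∧ Set.Icc α β ⊆ s ∧
      ContDiffOn ℝ 2 σ s ∧
      (∀ x ∈ Set.Icc α β, σ x ∈ Set.Icc a0 b0) ∧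
      σ α = a0 ∧ deriv σ α = a1 ∧ deriv (deriv σ) α = a2 ∧
      σ β = b0 ∧ deriv σ β = b1 ∧ deriv (deriv σ) β = b2 ∧
      ∀ x ∈ Set.Ioo α β, 0 < deriv (deriv σ) x := by
  set L := β - α
  have hL : 0 < L := sub_pos.2 hαβ
  obtain ⟨P, hP, hP0, hP'0, hP''0, hP1, hP'1, hP''1, hP''_pos⟩ :=
    exists_unitInterval_interpolation (d₀ := a1 / L) (v₁ := (b0 - a0) / L ^ 2) (d₁ := b1 / L)
      ha2 hb2 (by rw [div_lt_div_iff₀ hL (by positivity)]; nlinarith)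
      (by rw [div_lt_div_iff₀ (by positivity) hL]; nlinarith)
  set σ : ℝ → ℝ := fun x => a0 + L ^ 2 * P ((x - α) / L)
  have hσ : ContDiff ℝ 2 σ := by fun_prop
  have hσ' : deriv σ = fun x => L * deriv P ((x - α) / L) := by
    rw [deriv_const_add', deriv_const_mul_comp_sub_div, sq, mul_div_cancel_right₀ _ hL.ne']
  have hσ'' : deriv (deriv σ) = fun x => deriv (deriv P) ((x - α) / L) := by
    rw [hσ', deriv_const_mul_comp_sub_div, div_self hL.ne']
    simp only [one_mul]
  have hβ : (β - α) / L = 1 := div_self hL.ne'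
  have hσ''_pos : ∀ x ∈ Ioo α β, 0 < deriv (deriv σ) x := fun x hx => by
    rw [hσ'']
    exact hP''_pos _ ⟨div_pos (sub_pos.2 hx.1) hL, (div_lt_one hL).2 (by linarith [hx.2])⟩
  have hσα : σ α = a0 := by simp [σ, hP0]
  have hσβ : σ β = b0 := by simp only [σ, hβ, hP1]; field_simp; ring
  have hσ'α : deriv σ α = a1 := by simp [hσ', hP'0, mul_div_cancel₀ _ hL.ne']
  have hmono : MonotoneOn σ (Icc α β) :=
    monotoneOn_Icc_of_deriv_nonneg_of_deriv_deriv_nonneg (hσ.differentiable two_ne_zero)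
      (((contDiff_succ_iff_deriv (n := 1)).1 hσ).2.2.differentiable one_ne_zero) (hσ'α ▸ ha1.le)
      fun x hx => (hσ''_pos x hx).le
  exact ⟨univ, σ, isOpen_univ, subset_univ _, hσ.contDiffOn,
    by rw [← hσα, ← hσβ]; exact hmono.mapsTo_Icc, hσα, hσ'α, by simp [hσ'', hP''0], hσβ,
    by simp [hσ', hβ, hP'1, mul_div_cancel₀ _ hL.ne'], by simp [hσ'', hβ, hP''1], hσ''_pos⟩

theorem c2_interpolation_with_positive_second_derivative
    (α β a0 a1 a2 b0 b1 b2 : ℝ) (hαβ : α < β)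
    (ha0 : 0 < a0) (ha1 : 0 < a1) (ha2 : 0 < a2)
    (hb0 : 0 < b0) (hb1 : 0 < b1) (hb2 : 0 < b2)
    (h00 : a0 < b0) (h11 : a1 < b1)
    (hlow : a1 * (β - α) < b0 - a0) (hhigh : b0 - a0 < b1 * (β - α)) :
    ∃ (s : Set ℝ) (σ : ℝ → ℝ), IsOpen s ∧ Set.Icc α β ⊆ s ∧
      ContDiffOn ℝ 2 σ s ∧
      (∀ x ∈ Set.Icc α β, σ x ∈ Set.Icc a0 b0) ∧
      σ α = a0 ∧ deriv σ α = a1 ∧ deriv (deriv σ) α = a2 ∧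
      σ β = b0 ∧ deriv σ β = b1 ∧ deriv (deriv σ) β = b2 ∧
      ∀ x ∈ Set.Ioo α β, 0 < deriv (deriv σ) x :=
  c2_interpolation_with_positive_second_derivative_general α β a0 a1 a2 b0 b1 b2 hαβ ha1 ha2 hb2
    hlow hhigh
end
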